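/- arXiv:1301.6383 — 6 statements merged into one kernel-verified Lean document; each statement's English description precedes it below -/
import Mathlib

section
/- Let I be a set, (A_i)_{i∈I} a family of groups, C a group, h : A = ∏_{i∈I} A_i → C a group homomorphism, and κ an uncountable cardinal. Then the following are equivalent: (1) for every partition of I into fewer than κ subsets J_s (s ∈ S), there exist finitely many indices s_0, …, s_{n-1} ∈ S such that the subgroup ∏_{i ∈ I − (J_{s_0} ∪ … ∪ J_{s_{n-1}})} A_i lies in ker(h); (2) h factors as A → A/U_0 × … × A/U_{n-1} → C for some finite family of κ-complete ultrafilters U_0, …, U_{n-1} on I. Moreover, when these hold and card(I) is less than every κ-complete measurable cardinal (in particular, if no such cardinals exist), h factors through the projection of A onto the product of finitely many of the A_i. -/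
universe u

open Function

/-- The setoid on a dependent product given by a filter. -/
def redSetoid {I : Type u} (F : Filter I) (A : I → Type u) : Setoid (∀ i, A i) where
  r a b := {i | a i = b i} ∈ F
  iseqv := by
    refine ⟨fun a => ?_, fun {a b} h => ?_, fun {a b c} h₁ h₂ => ?_⟩
    · simp
    · simpa [eq_comm] using h
    · exact Filter.mem_of_superset (Filter.inter_mem h₁ h₂)
        (fun i hi => hi.1.trans hi.2)

/-- The reduced product of a family of sets with respect to a filter. -/
def ReducedProduct {I : Type u} (F : Filter I) (A : I → Type u) : Type u :=
  Quotient (redSetoid F A)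

/-- The canonical quotient map onto a reduced product. -/
def reducedMk {I : Type u} (F : Filter I) (A : I → Type u) (a : ∀ i, A i) :
    ReducedProduct F A :=
  Quotient.mk (redSetoid F A) a

/-- A filter is `κ`-complete if it is closed under intersections of
families of fewer than `κ` of its members. -/
def KappaComplete {I : Type u} (κ : Cardinal.{u}) (F : Filter I) : Prop :=
  ∀ 𝒮 : Set (Set I), Cardinal.mk 𝒮 < κ → (∀ s ∈ 𝒮, s ∈ F) → ⋂₀ 𝒮 ∈ F

/-- A cardinal `μ` is a `κ`-complete measurable cardinal if there is a
nonprincipal `κ`-complete ultrafilter on a set of cardinality `μ`. -/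
def IsKappaCompleteMeasurable (κ μ : Cardinal.{u}) : Prop :=
  ∃ U : Ultrafilter μ.out, (∀ x, (U : Filter μ.out) ≠ pure x) ∧
    KappaComplete κ (U : Filter μ.out)


/-!
Let `K` be the filter of sets `X` such that every element of `∏ A i` that is trivial on `X`
lies in `ker h`. Condition (1) says that every partition of `I` into fewer than `κ` pieces has
finitely many pieces whose union lies in `K`. As `κ > ℵ₀`, this forbids an infinite sequence of
disjoint `K`-positive sets, so every `K`-positive set contains an atom `Z` of `𝒫 I / K`, and
finitely many atoms cover `I` modulo `K`. Each `K ⊓ 𝓟 Z` is an ultrafilter inheriting the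
partition property, and such an ultrafilter is `κ`-complete: if `⋂₀ 𝒮 ∉ U`, partition the points
outside `⋂₀ 𝒮` by the first member of a well-ordering of `𝒮` that omits them. Then `K` is the
intersection of these ultrafilters, which says exactly that `h` factors through the product of
the corresponding ultraproducts. When `card I` is below every `κ`-complete measurable cardinal,
every `κ`-complete ultrafilter on `I` is principal, and the ultraproducts are factors `A i`.
-/

section

open Set
open scoped Cardinal

namespace Filter

variable {I : Type u} {κ : Cardinal.{u}} {F G : Filter I}

def PartitionCompact (κ : Cardinal.{u}) (F : Filter I) : Prop :=
  ∀ (S : Type u) (J : S → Set I), #S < κ → Pairwise (Disjoint on J) → ⋃ s, J s = univ →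
    ∃ t : Finset S, ⋃ s ∈ t, J s ∈ F

theorem PartitionCompact.mono (hG : PartitionCompact κ G) (hFG : F ≤ G) :
    PartitionCompact κ F := fun S J hS hJ hcover =>
  (hG S J hS hJ hcover).imp fun _ ht => hFG ht

theorem PartitionCompact.iSup {ι : Type*} [Finite ι] {F : ι → Filter I}
    (hF : ∀ m, PartitionCompact κ (F m)) : PartitionCompact κ (⨆ m, F m) := by
  classical
  intro S J hS hJ hcover
  choose t ht using fun m => hF m S J hS hJ hcover
  have := Fintype.ofFinite ι
  refine ⟨Finset.univ.biUnion t, mem_iSup.2 fun m => mem_of_superset (ht m) ?_⟩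
  exact biUnion_subset_biUnion_left fun s hs =>
    Finset.mem_biUnion.2 ⟨m, Finset.mem_univ m, hs⟩

theorem _root_.KappaComplete.partitionCompact {U : Ultrafilter I}
    (hU : KappaComplete κ (U : Filter I)) : PartitionCompact κ (U : Filter I) := by
  intro S J hS _ hcover
  by_contra! hno
  have hcompl : ∀ s, (J s)ᶜ ∈ U := fun s =>
    U.compl_mem_iff_notMem.2 fun hs => hno {s} (by simpa using hs)
  have hinter := hU (range fun s => (J s)ᶜ) (Cardinal.mk_range_le.trans_lt hS)
    (forall_mem_range.2 hcompl)
  rw [sInter_range, ← compl_iUnion, hcover, compl_univ] at hinter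
  exact U.empty_notMem hinter

theorem PartitionCompact.exists_finset_union_compl_mem (hF : PartitionCompact κ F)
    (hκ : ℵ₀ ≤ κ) {S : Type u} (J : S → Set I) (hS : #S < κ) (hJ : Pairwise (Disjoint on J)) :
    ∃ t : Finset S, (⋃ s ∈ t, J s) ∪ (⋃ s, J s)ᶜ ∈ F := by
  classical
  let J' : Option S → Set I := fun o => o.elim (⋃ s, J s)ᶜ J
  have hcard : #(Option S) < κ := by
    rw [Cardinal.mk_option]
    exact Cardinal.add_lt_of_lt hκ hS (Cardinal.one_lt_aleph0.trans_le hκ)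
  have hdisj : Pairwise (Disjoint on J') := by
    rintro (_ | s) (_ | s') hne
    · exact absurd rfl hne
    · exact disjoint_compl_left.mono_right (subset_iUnion J s')
    · exact disjoint_compl_right.mono_left (subset_iUnion J s)
    · exact hJ fun h => hne (congrArg some h)
  have hcover : ⋃ o, J' o = univ := by
    rw [iUnion_option]
    exact compl_union_self _
  obtain ⟨t, ht⟩ := hF _ J' hcard hdisj hcover
  refine ⟨Finset.eraseNone t, mem_of_superset ht ?_⟩
  intro i hi
  obtain ⟨(_ | s), ho, hi⟩ := mem_iUnion₂.1 hi
  · exact Or.inr hi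
  · exact Or.inl (mem_biUnion (Finset.mem_eraseNone.2 ho) hi)

theorem PartitionCompact.exists_not_frequently (hF : PartitionCompact κ F) (hκ : ℵ₀ < κ)
    (Z : ℕ → Set I) (hZ : Pairwise (Disjoint on Z)) : ∃ k, ¬∃ᶠ i in F, i ∈ Z k := by
  obtain ⟨t, ht⟩ := hF.exists_finset_union_compl_mem hκ.le (Z ∘ ULift.down)
    (by simpa using hκ) (hZ.comp_of_injective ULift.down_injective)
  let N := t.sup ULift.down + 1
  refine ⟨N, not_frequently.2 (mem_of_superset ht ?_)⟩
  rintro i (hi | hi) hiN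
  · obtain ⟨k, hk, hik⟩ := mem_iUnion₂.1 hi
    have hkN : k.down ≠ N := (Nat.lt_succ_of_le (t.le_sup hk)).ne
    exact (hZ hkN).ne_of_mem hik hiN rfl
  · exact hi (mem_iUnion.2 ⟨⟨N⟩, hiN⟩)

theorem PartitionCompact.not_forall_exists_frequently_diff (hF : PartitionCompact κ F)
    (hκ : ℵ₀ < κ) {Q : Set I → Prop} {V₀ : Set I} (hV₀ : Q V₀) :
    ¬∀ V, Q V → ∃ Z ⊆ V, (∃ᶠ i in F, i ∈ Z) ∧ Q (V \ Z) := by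
  intro step
  choose Z hZV hZ hQ using step
  let next : {V // Q V} → {V // Q V} := fun V => ⟨V.1 \ Z V.1 V.2, hQ _ V.2⟩
  let W : ℕ → {V // Q V} := fun k => next^[k] ⟨V₀, hV₀⟩
  have hW : ∀ k, (W (k + 1)).1 = (W k).1 \ Z _ (W k).2 := fun k =>
    congrArg Subtype.val (Function.iterate_succ_apply' next k _)
  have hanti : Antitone fun k => (W k).1 :=
    antitone_nat_of_succ_le fun k => (hW k).trans_subset sdiff_subset
  have hdisj : Pairwise (Disjoint on fun k => Z _ (W k).2) := by
    refine (pairwise_disjoint_on _).2 fun m n hmn => ?_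
    have hsub : Z _ (W n).2 ⊆ (W m).1 \ Z _ (W m).2 :=
      (hZV _ _).trans ((hanti hmn).trans (hW m).subset)
    exact disjoint_sdiff_right.mono_right hsub
  obtain ⟨k, hk⟩ := hF.exists_not_frequently hκ _ hdisj
  exact hk (hZ _ _)

/-- `Z` is an atom of the Boolean algebra `𝒫 I / F`. -/
def IsAtomMod (F : Filter I) (Z : Set I) : Prop :=
  ∃ U : Ultrafilter I, (U : Filter I) = F ⊓ 𝓟 Z

theorem IsAtomMod.frequently {Z : Set I} (hZ : IsAtomMod F Z) : ∃ᶠ i in F, i ∈ Z := by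
  obtain ⟨U, hU⟩ := hZ
  exact frequently_mem_iff_neBot.2 (hU ▸ U.neBot)

theorem exists_split_of_not_isAtomMod {V : Set I} (hV : ∃ᶠ i in F, i ∈ V)
    (hnot : ¬IsAtomMod F V) : ∃ X, (∃ᶠ i in F, i ∈ V ∩ X) ∧ ∃ᶠ i in F, i ∈ V \ X := by
  by_contra! hsplit
  refine hnot ⟨Ultrafilter.ofComplNotMemIff (F ⊓ 𝓟 V) fun X =>
    ⟨fun hX => ?_, fun hX hXc => ?_⟩, rfl⟩
  · have hX' : ∃ᶠ i in F ⊓ 𝓟 V, i ∈ X := hX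
    have hVX : ∃ᶠ i in F, i ∈ V ∩ X := by
      simpa only [frequently_inf_principal, and_comm, mem_inter_iff] using hX'
    refine mem_inf_principal.2 (mem_of_superset (hsplit X hVX) ?_)
    exact fun i hi hiV => of_not_not fun hiX => hi ⟨hiV, hiX⟩
  · have := frequently_mem_iff_neBot.1 hV
    exact compl_notMem hX hXc

theorem PartitionCompact.exists_isAtomMod_subset (hF : PartitionCompact κ F) (hκ : ℵ₀ < κ)
    {Y : Set I} (hY : ∃ᶠ i in F, i ∈ Y) : ∃ Z ⊆ Y, IsAtomMod F Z := by
  by_contra! hno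
  refine hF.not_forall_exists_frequently_diff hκ (Q := fun V => V ⊆ Y ∧ ∃ᶠ i in F, i ∈ V)
    ⟨subset_rfl, hY⟩ ?_
  rintro V ⟨hVY, hV⟩
  obtain ⟨X, hVX, hVX'⟩ := exists_split_of_not_isAtomMod hV (hno V hVY)
  exact ⟨V ∩ X, inter_subset_left, hVX, sdiff_subset.trans hVY, by rwa [sdiff_self_inter]⟩

theorem PartitionCompact.exists_isAtomMod_cover (hF : PartitionCompact κ F) (hκ : ℵ₀ < κ) :
    ∃ T : Finset (Set I), (∀ Z ∈ T, IsAtomMod F Z) ∧ ⋃₀ (T : Set (Set I)) ∈ F := by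
  classical
  by_contra! hno
  refine hF.not_forall_exists_frequently_diff hκ
    (Q := fun V => ∃ T : Finset (Set I), (∀ Z ∈ T, IsAtomMod F Z) ∧ V = (⋃₀ ↑T)ᶜ)
    (V₀ := univ) ⟨∅, by simp, by simp⟩ ?_
  rintro V ⟨T, hT, rfl⟩
  have hV : ∃ᶠ i in F, i ∈ (⋃₀ (T : Set (Set I)))ᶜ := fun h =>
    hno T hT (h.mono fun _ => not_not.1)
  obtain ⟨Z, hZV, hZ⟩ := hF.exists_isAtomMod_subset hκ hV
  refine ⟨Z, hZV, hZ.frequently, insert Z T, (Finset.forall_mem_insert _ _ _).2 ⟨hZ, hT⟩, ?_⟩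
  rw [Finset.coe_insert, sUnion_insert, compl_union, sdiff_eq, inter_comm]

theorem _root_.Ultrafilter.kappaComplete_of_partitionCompact {U : Ultrafilter I} (hκ : ℵ₀ ≤ κ)
    (hU : PartitionCompact κ (U : Filter I)) : KappaComplete κ (U : Filter I) := by
  intro 𝒮 h𝒮 hmem
  let r : 𝒮 → 𝒮 → Prop := WellOrderingRel
  have hwf : WellFounded r := WellOrderingRel.isWellOrder.wf
  -- `J s`: the points for which `s` is the first member of `𝒮` omitting them
  let J : 𝒮 → Set I := fun s => (s : Set I)ᶜ ∩ ⋂ (s' : 𝒮) (_ : r s' s), (s' : Set I)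
  have hJ : Pairwise (Disjoint on J) := by
    intro s s' hne
    rcases trichotomous_of r s s' with h | h | h
    · exact disjoint_left.2 fun i hi hi' => hi.1 (mem_iInter₂.1 hi'.2 s h)
    · exact absurd h hne
    · exact disjoint_left.2 fun i hi hi' => hi'.1 (mem_iInter₂.1 hi.2 s' h)
  have hcompl : (⋃ s, J s)ᶜ ⊆ ⋂₀ 𝒮 := by
    refine fun i hi => mem_sInter.2 fun X hX => of_not_not fun hiX => hi ?_
    have hne : {s : 𝒮 | i ∉ (s : Set I)}.Nonempty := ⟨⟨X, hX⟩, hiX⟩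
    refine mem_iUnion.2 ⟨hwf.min _ hne, hwf.min_mem _ hne, mem_iInter₂.2 fun s' hs' => ?_⟩
    exact of_not_not fun hi' => hwf.not_lt_min {s : 𝒮 | i ∉ (s : Set I)} hi' hs'
  obtain ⟨t, ht⟩ := hU.exists_finset_union_compl_mem hκ J h𝒮 hJ
  rcases Ultrafilter.union_mem_iff.1 ht with ht | ht
  · obtain ⟨s, -, hs⟩ := (Ultrafilter.finite_biUnion_mem_iff t.finite_toSet).1 ht
    exact absurd (mem_of_superset hs inter_subset_left) (U.compl_notMem_iff.2 (hmem s s.2))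
  · exact mem_of_superset ht hcompl

theorem PartitionCompact.exists_kappaComplete_ultrafilters (hF : PartitionCompact κ F)
    (hκ : ℵ₀ < κ) : ∃ (n : ℕ) (U : Fin n → Ultrafilter I),
      (∀ m, KappaComplete κ (U m : Filter I)) ∧ F ≤ ⨆ m, (U m : Filter I) := by
  obtain ⟨T, hT, hcover⟩ := hF.exists_isAtomMod_cover hκ
  choose U hU using hT
  let Z : Fin T.card → T := T.equivFin.symm
  refine ⟨T.card, fun m => U _ (Z m).2, fun m => ?_, fun X hX => ?_⟩
  · refine Ultrafilter.kappaComplete_of_partitionCompact hκ.le (hF.mono ?_)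
    exact (hU _ _).trans_le inf_le_left
  · have hXZ : ∀ W : T, {i | i ∈ (W : Set I) → i ∈ X} ∈ F := fun W => by
      have := mem_iSup.1 hX (T.equivFin W)
      simpa only [Z, Equiv.symm_apply_apply, hU, mem_inf_principal] using this
    filter_upwards [hcover, iInter_mem.2 hXZ] with i ⟨W, hW, hiW⟩ hi
    exact mem_iInter.1 hi ⟨W, hW⟩ hiW

theorem partitionCompact_iff_exists_kappaComplete_ultrafilters (hκ : ℵ₀ < κ) :
    PartitionCompact κ F ↔ ∃ (n : ℕ) (U : Fin n → Ultrafilter I),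
      (∀ m, KappaComplete κ (U m : Filter I)) ∧ F ≤ ⨆ m, (U m : Filter I) :=
  ⟨fun hF => hF.exists_kappaComplete_ultrafilters hκ, fun ⟨_, _, hU, hle⟩ =>
    (PartitionCompact.iSup fun m => (hU m).partitionCompact).mono hle⟩

end Filter

theorem Ultrafilter.exists_eq_pure_of_kappaComplete {I : Type u} {κ : Cardinal.{u}}
    (hI : ∀ μ, IsKappaCompleteMeasurable κ μ → #I < μ) (U : Ultrafilter I)
    (hU : KappaComplete κ (U : Filter I)) : ∃ x, U = pure x := by
  by_contra! hne
  let e : (#I).out ≃ I := Cardinal.outMkEquiv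
  refine (hI _ ⟨U.map e.symm, fun x hx => hne (e x) ?_, ?_⟩).false
  · have hx' : U.map e.symm = pure x := Ultrafilter.coe_injective hx
    calc U = (U.map e.symm).map e := by simp [Ultrafilter.map_map]
      _ = pure (e x) := by rw [hx', Ultrafilter.map_pure]
  · have : CardinalInterFilter (U : Filter I) κ := ⟨hU⟩
    rw [Ultrafilter.coe_map]
    exact CardinalInterFilter.cardinal_sInter_mem

end

theorem reducedMk_eq_iff {I : Type u} {F : Filter I} {A : I → Type u} {a b : ∀ i, A i} :
    reducedMk F A a = reducedMk F A b ↔ ∀ᶠ i in F, a i = b i :=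
  Quotient.eq

section KernelFilter

variable {I : Type*} {A : I → Type*} [∀ i, Group (A i)] {C : Type*} [Group C]

def kernelFilter (h : (∀ i, A i) →* C) : Filter I where
  sets := {X | ∀ a : ∀ i, A i, (∀ i ∈ X, a i = 1) → h a = 1}
  univ_sets a ha := by rw [show a = 1 from funext fun i => ha i trivial, map_one]
  sets_of_superset hX hXY a ha := hX a fun i hi => ha i (hXY hi)
  inter_sets {X Y} hX hY a ha := by
    classical
    have hsplit : a = X.piecewise (1 : ∀ i, A i) a * X.piecewise a 1 := by
      ext i
      by_cases hi : i ∈ X <;> simp [hi]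
    rw [hsplit, map_mul, hX _ fun i hi => by simp [hi], hY _ fun i hi => ?_, one_mul]
    by_cases hiX : i ∈ X
    · simp [hiX, ha i ⟨hiX, hi⟩]
    · simp [hiX]

theorem exists_comp_eq_iff_kernelFilter_le (h : (∀ i, A i) →* C) {β : Type*}
    (f : (∀ i, A i) → β) (G : Filter I) (hf : ∀ a b, f a = f b ↔ ∀ᶠ i in G, a i = b i) :
    (∃ g : β → C, ⇑h = g ∘ f) ↔ kernelFilter h ≤ G := by
  rw [← Function.factorsThrough_iff]
  constructor
  · intro hfac X hX a ha
    rw [← map_one h]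
    exact hfac ((hf a 1).2 (Filter.mem_of_superset hX ha))
  · intro hle a b hab
    have hab' : h (a⁻¹ * b) = 1 := hle ((hf a b).1 hab) _ fun _ hi => inv_mul_eq_one.2 hi
    rwa [map_mul, map_inv, inv_mul_eq_one] at hab'

end KernelFilter

/-- For a group homomorphism `h` on a product of groups
`A = ∏ᵢ Aᵢ` and an uncountable cardinal `κ`, the following are equivalent:
(1) for every partition of `I` into fewer than `κ` subsets `J s`, there are
finitely many indices `s ∈ t` such that the subgroup of elements supported in
`I − ⋃_{s ∈ t} J s` lies in `ker h`;
(2) `h` factors through the natural map `A → A/U 0 × … × A/U (n-1)` for some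
finitely many `κ`-complete ultrafilters on `I`.
Moreover, when these hold, if `card I` is less than every `κ`-complete
measurable cardinal, then `h` factors through the projection of `A` onto the
product of finitely many of the `A i`. -/
theorem hom_on_product_factors_through_kappa_complete_ultraproducts_iff
    {I : Type u} (A : I → Type u) [∀ i, Group (A i)] {C : Type u} [Group C]
    (h : (∀ i, A i) →* C) (κ : Cardinal.{u}) (hκ : Cardinal.aleph0 < κ) :
    ((∀ (S : Type u) (J : S → Set I), Cardinal.mk S < κ →
        Pairwise (Disjoint on J) → (⋃ s, J s) = Set.univ →
        ∃ t : Finset S, ∀ a : ∀ i, A i,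
          (∀ i, i ∈ (⋃ s ∈ t, J s) → a i = 1) → h a = 1)
      ↔ (∃ (n : ℕ) (U : Fin n → Ultrafilter I),
          (∀ m, KappaComplete κ (U m : Filter I)) ∧
          ∃ g : (∀ m, ReducedProduct (U m : Filter I) A) → C,
            ⇑h = g ∘ fun (a : ∀ i, A i) (m : Fin n) =>
              reducedMk (U m : Filter I) A a))
  ∧ ((∀ (S : Type u) (J : S → Set I), Cardinal.mk S < κ →
        Pairwise (Disjoint on J) → (⋃ s, J s) = Set.univ →
        ∃ t : Finset S, ∀ a : ∀ i, A i,
          (∀ i, i ∈ (⋃ s ∈ t, J s) → a i = 1) → h a = 1) →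
      (∀ μ : Cardinal.{u}, IsKappaCompleteMeasurable κ μ → Cardinal.mk I < μ) →
      ∃ (n : ℕ) (s : Fin n → I) (g : (∀ m, A (s m)) → C),
        ⇑h = g ∘ fun (a : ∀ i, A i) (m : Fin n) => a (s m)) := by
  refine ⟨(Filter.partitionCompact_iff_exists_kappaComplete_ultrafilters
    (F := kernelFilter h) hκ).trans ?_, fun hker hI => ?_⟩
  · refine exists_congr fun n => exists_congr fun U => and_congr_right fun _ => ?_
    refine (exists_comp_eq_iff_kernelFilter_le h _ _ fun a b => ?_).symm
    simp only [funext_iff, reducedMk_eq_iff, Filter.eventually_iSup]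
  · obtain ⟨n, U, hU, hle⟩ :=
      Filter.PartitionCompact.exists_kappaComplete_ultrafilters (F := kernelFilter h) hker hκ
    choose s hs using fun m => (U m).exists_eq_pure_of_kappaComplete hI (hU m)
    refine ⟨n, s, (exists_comp_eq_iff_kernelFilter_le h _ (⨆ m, pure (s m)) fun a b => ?_).2 ?_⟩
    · simp only [funext_iff, Filter.eventually_iSup, Filter.eventually_pure]
    · simpa only [hs, Ultrafilter.coe_pure] using hle
end

section
/- Let k be an infinite field, (A_i)_{i∈I} a family of k-algebras, B a k-algebra with dim_k(B) < card(k), and f : A = ∏_{i∈I} A_i → B a surjective k-algebra homomorphism. Then the composite homomorphism A → B → B/Z(B) factors as A → A/U_0 × … × A/U_{n-1} → B/Z(B) for some n ∈ ℕ, where U_0, …, U_{n-1} are card(k)^+-complete ultrafilters on I. -/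
universe u

/-- The total annihilator ideal `Z(B) = {x | xB = Bx = 0}` of a (nonunital,
nonassociative) `k`-algebra, as a `k`-submodule. -/
def totalAnnihilator (k : Type u) (B : Type u) [Field k]
    [NonUnitalNonAssocRing B] [Module k B] [SMulCommClass k B B]
    [IsScalarTower k B B] : Submodule k B where
  carrier := {x | ∀ y : B, x * y = 0 ∧ y * x = 0}
  zero_mem' := fun y => ⟨zero_mul y, mul_zero y⟩
  add_mem' := by
    intro a b ha hb y
    exact ⟨by rw [add_mul, (ha y).1, (hb y).1, add_zero],
           by rw [mul_add, (ha y).2, (hb y).2, add_zero]⟩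
  smul_mem' := by
    intro c x hx y
    exact ⟨by rw [smul_mul_assoc, (hx y).1, smul_zero],
           by rw [mul_smul_comm, (hx y).2, smul_zero]⟩

/-! Call `T ⊆ I` null if `f` sends every `a` vanishing off `T` into `Z(B)`; complements of null
sets form the filter `conullFilter f`, and `f a ≡ f b` modulo `Z(B)` as soon as `{a = b}` is
conull. For fixed `a`, the scalings `e : I → k` with `f (e • a) ∈ Z(B)` form an ideal, because `f`
is surjective. Given any labelling `ν : I → k`, the `card k` vectors `f ((ν - z)⁻¹ • a)`, `z ∈ k`,
are dependent modulo `Z(B)` since `dim B < card k`, so this ideal contains `q ∘ ν` for a nonzero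
sum of partial fractions `q`, which has finitely many zeros. With suitable labellings this makes
the conull filter `card(k)⁺`-complete and rules out infinitely many disjoint non-null sets. A filter
of the latter kind is the supremum of finitely many ultrafilters `F ⊓ 𝓟 T`, and these inherit the
completeness of `F`. -/

open Filter Set Cardinal

namespace Filter

variable {α : Type*} {F : Filter α}

open Function in
def NoInfiniteAntichain (F : Filter α) : Prop :=
  ∀ S : ℕ → Set α, Pairwise (Disjoint on S) → ∃ n, F ⊓ 𝓟 (S n) = ⊥

theorem NoInfiniteAntichain.not_of_forall_exists_diff (hF : F.NoInfiniteAntichain)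
    {p : Set α → Prop} (hp : ∀ R, p R → ∃ Q ⊆ R, F ⊓ 𝓟 Q ≠ ⊥ ∧ p (R \ Q)) {R : Set α} :
    ¬ p R := by
  intro hR
  choose Q hQR hQ hpQ using hp
  let D : ℕ → {R // p R} := fun n => Nat.rec ⟨R, hR⟩ (fun _ D => ⟨D.1 \ Q D.1 D.2, hpQ _ D.2⟩) n
  have hD : Antitone fun n => (D n).1 := antitone_nat_of_succ_le fun _ => sdiff_subset
  obtain ⟨n, hn⟩ := hF (fun n => Q _ (D n).2) <| (pairwise_disjoint_on _).2 fun m n hmn =>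
    disjoint_sdiff_right.mono_right ((hQR _ _).trans (hD hmn))
  exact hQ _ _ hn

theorem NoInfiniteAntichain.exists_subset_isAtom (hF : F.NoInfiniteAntichain) {S : Set α}
    (hS : F ⊓ 𝓟 S ≠ ⊥) : ∃ T ⊆ S, IsAtom (F ⊓ 𝓟 T) := by
  by_contra! h
  refine hF.not_of_forall_exists_diff (p := fun R => R ⊆ S ∧ F ⊓ 𝓟 R ≠ ⊥)
    (fun R ⟨hRS, hR⟩ => ?_) ⟨subset_rfl, hS⟩
  obtain ⟨G, hG, hGR, hRG⟩ : ∃ G : Filter α, G.NeBot ∧ G ≤ F ⊓ 𝓟 R ∧ ¬ F ⊓ 𝓟 R ≤ G := by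
    have := h R hRS
    rw [isAtom_iff_le_of_ge] at this
    push Not at this
    exact this (neBot_iff.2 hR)
  -- a set in `G` but not in `F ⊓ 𝓟 R` splits `R` into two non-null halves
  obtain ⟨X, hXG, hXR⟩ := Filter.not_le.1 hRG
  refine ⟨R ∩ X, inter_subset_left, ne_bot_of_le_ne_bot hG.ne ?_, sdiff_subset.trans hRS, ?_⟩
  · rw [← inf_principal, ← inf_assoc]
    exact le_inf hGR (le_principal_iff.2 hXG)
  · rwa [sdiff_self_inter, Set.sdiff_eq, ← inf_principal, ← inf_assoc, Ne, inf_principal_eq_bot,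
      compl_compl]

theorem NoInfiniteAntichain.exists_isAtom_iUnion_mem (hF : F.NoInfiniteAntichain) :
    ∃ (n : ℕ) (T : Fin n → Set α), (∀ m, IsAtom (F ⊓ 𝓟 (T m))) ∧ ⋃ m, T m ∈ F := by
  by_contra! h
  refine hF.not_of_forall_exists_diff (R := univ) (p := fun R => ∀ n (T : Fin n → Set α),
    (∀ m, IsAtom (F ⊓ 𝓟 (T m))) → F ⊓ 𝓟 (R \ ⋃ m, T m) ≠ ⊥) (fun R hR => ?_)
    fun n T hT => by
      rw [Ne, inf_principal_eq_bot, ← compl_eq_univ_sdiff, compl_compl]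
      exact h n T hT
  obtain ⟨Q, hQR, hQ⟩ := hF.exists_subset_isAtom (by simpa using hR 0 Fin.elim0 fun m => m.elim0)
  refine ⟨Q, hQR, hQ.1, fun n T hT => ?_⟩
  have hcons : ⋃ m, (Fin.cons Q T : Fin (n + 1) → Set α) m = Q ∪ ⋃ m, T m := by
    ext x; simp
  simpa [hcons, Set.sdiff_sdiff] using hR (n + 1) (Fin.cons Q T) (Fin.cases hQ hT)

theorem iSup_inf_principal_of_iUnion_mem {ι : Type*} [Finite ι] {T : ι → Set α}
    (h : ⋃ i, T i ∈ F) : ⨆ i, F ⊓ 𝓟 (T i) = F := by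
  refine le_antisymm (iSup_le fun _ => inf_le_left) fun X hX => ?_
  simp only [mem_iSup, mem_inf_principal'] at hX
  filter_upwards [iInter_mem.2 hX, h] with x hx hxT
  obtain ⟨i, hi⟩ := mem_iUnion.1 hxT
  exact (mem_iInter.1 hx i).resolve_left (not_not.2 hi)

end Filter

theorem KappaComplete.inf_principal {I : Type u} {κ : Cardinal.{u}} {F : Filter I}
    (hF : KappaComplete κ F) (T : Set I) : KappaComplete κ (F ⊓ 𝓟 T) := by
  intro 𝒮 h𝒮 hmem
  have := hF ((Tᶜ ∪ ·) '' 𝒮) (Cardinal.mk_image_le.trans_lt h𝒮) (by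
    rintro _ ⟨X, hX, rfl⟩
    exact mem_inf_principal'.1 (hmem X hX))
  rwa [mem_inf_principal', sInter_eq_biInter, union_iInter₂, ← sInter_image]

open Polynomial in
theorem finite_setOf_sum_mul_inv_sub_eq_zero {k : Type*} [Field k] {s : Finset k} {g : k → k}
    {z₀ : k} (hz₀ : z₀ ∈ s) (hg : g z₀ ≠ 0) :
    {x | ∑ z ∈ s, g z * (x - z)⁻¹ = 0}.Finite := by
  classical
  -- the numerator of the sum after clearing denominators; it does not vanish at `z₀`
  set P : k[X] := ∑ z ∈ s, C (g z) * ∏ z' ∈ s.erase z, (X - C z')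
  have hP : ∀ x ∉ s, P.eval x = (∑ z ∈ s, g z * (x - z)⁻¹) * ∏ z ∈ s, (x - z) := by
    intro x hx
    simp only [P, eval_finsetSum, eval_mul, eval_C, eval_prod, eval_sub, eval_X, Finset.sum_mul]
    refine Finset.sum_congr rfl fun z hz => ?_
    rw [← Finset.mul_prod_erase s _ hz, ← mul_assoc, mul_assoc (g z),
      inv_mul_cancel₀ (sub_ne_zero.2 (ne_of_mem_of_not_mem hz hx).symm), mul_one]
  have hP0 : P ≠ 0 := by
    intro h0
    have := congrArg (eval z₀) h0
    simp only [P, eval_finsetSum, eval_mul, eval_C, eval_prod, eval_sub, eval_X, eval_zero] at this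
    rw [Finset.sum_eq_single z₀ (fun z hz hne => ?_) (absurd hz₀)] at this
    · exact hg ((mul_eq_zero.1 this).resolve_right <| Finset.prod_ne_zero_iff.2 fun z hz =>
        sub_ne_zero.2 (Finset.ne_of_mem_erase hz).symm)
    · rw [Finset.prod_eq_zero (Finset.mem_erase.2 ⟨Ne.symm hne, hz₀⟩) (sub_self z₀), mul_zero]
  refine ((finite_setOfPred_isRoot hP0).union s.finite_toSet).subset fun x hx => ?_
  by_cases hxs : x ∈ s
  · exact Or.inr hxs
  · exact Or.inl (show P.eval x = 0 by rw [hP x hxs, hx.out, zero_mul])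

theorem Set.indicator_one_smul_apply {R ι : Type*} {M : ι → Type*} [MonoidWithZero R]
    [∀ i, Zero (M i)] [∀ i, MulActionWithZero R (M i)] (S : Set ι) (a : ∀ i, M i) (i : ι)
    [Decidable (i ∈ S)] : (S.indicator (1 : ι → R) • a) i = if i ∈ S then a i else 0 := by
  by_cases h : i ∈ S <;> simp [h]

section

variable {k : Type u} [Field k] {I : Type u} {A : I → Type u}
  [∀ i, NonUnitalNonAssocRing (A i)] [∀ i, Module k (A i)]
  {B : Type u} [NonUnitalNonAssocRing B] [Module k B] [SMulCommClass k B B]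
  [IsScalarTower k B B]

def conullFilter (f : (∀ i, A i) →ₙₐ[k] B) : Filter I where
  sets := {T | ∀ a : ∀ i, A i, (∀ i ∈ T, a i = 0) → f a ∈ totalAnnihilator k B}
  univ_sets a ha := by
    rw [show a = 0 from funext fun i => ha i trivial, map_zero]
    exact zero_mem _
  sets_of_superset hT hTT' a ha := hT a fun i hi => ha i (hTT' hi)
  inter_sets {T T'} hT hT' a ha := by
    classical
    have hsplit : a = (Tᶜ.indicator 1 : I → k) • a + (T.indicator 1 : I → k) • a := by
      funext i; by_cases h : i ∈ T <;> simp [h]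
    rw [hsplit, map_add]
    refine add_mem (hT _ fun i hi => by simp [hi]) (hT' _ fun i hi => ?_)
    by_cases h : i ∈ T
    · simp [h, ha i ⟨h, hi⟩]
    · simp [h]

variable {f : (∀ i, A i) →ₙₐ[k] B}

theorem mem_conullFilter {T : Set I} : T ∈ conullFilter f ↔
    ∀ a : ∀ i, A i, (∀ i ∈ T, a i = 0) → f a ∈ totalAnnihilator k B :=
  Iff.rfl

variable [∀ i, SMulCommClass k (A i) (A i)] [∀ i, IsScalarTower k (A i) (A i)]

def scalingIdeal (hf : Function.Surjective f) (a : ∀ i, A i) : Ideal (I → k) where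
  carrier := {e | f (e • a) ∈ totalAnnihilator k B}
  zero_mem' := by simp [zero_smul]
  add_mem' {e e'} he he' := by simpa [add_smul] using add_mem he he'
  smul_mem' c e he y := by
    obtain ⟨d, rfl⟩ := hf y
    rw [smul_eq_mul, ← map_mul, ← map_mul]
    have h₁ : (c * e) • a * d = e • a * c • d := by rw [smul_mul_smul, mul_comm, smul_mul_assoc]
    have h₂ : d * (c * e) • a = c • d * e • a := by rw [smul_mul_smul, mul_smul_comm]
    rw [h₁, h₂, map_mul, map_mul]
    exact he _

theorem mem_scalingIdeal {hf : Function.Surjective f} {a : ∀ i, A i} {e : I → k} :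
    e ∈ scalingIdeal hf a ↔ f (e • a) ∈ totalAnnihilator k B :=
  Iff.rfl

theorem exists_comp_mem_scalingIdeal (hf : Function.Surjective f)
    (hB : Module.rank k B < #k) (ν : I → k) (a : ∀ i, A i) :
    ∃ q : k → k, {x | q x = 0}.Finite ∧ q ∘ ν ∈ scalingIdeal hf a := by
  let v : k → B ⧸ totalAnnihilator k B := fun z =>
    (totalAnnihilator k B).mkQ (f ((fun i => (ν i - z)⁻¹) • a))
  have hv : ¬ LinearIndependent k v := fun h =>
    (h.cardinal_le_rank.trans (rank_quotient_le _)).not_gt hB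
  obtain ⟨s, g, hsum, z₀, hz₀, hg⟩ : ∃ (s : Finset k) (g : k → k),
      ∑ z ∈ s, g z • v z = 0 ∧ ∃ z ∈ s, g z ≠ 0 := by
    simpa [linearIndependent_iff'] using hv
  refine ⟨fun x => ∑ z ∈ s, g z * (x - z)⁻¹, finite_setOf_sum_mul_inv_sub_eq_zero hz₀ hg, ?_⟩
  have : (fun x => ∑ z ∈ s, g z * (x - z)⁻¹) ∘ ν • a =
      ∑ z ∈ s, g z • (fun i => (ν i - z)⁻¹) • a := by
    funext i; simp [Finset.sum_smul, mul_smul]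
  rw [mem_scalingIdeal, ← Submodule.Quotient.mk_eq_zero, ← hsum, this, ← Submodule.mkQ_apply]
  simp only [v, map_sum, map_smul]

theorem finite_setOf_indicator_fiber_not_mem (hf : Function.Surjective f)
    (hB : Module.rank k B < #k) (ν : I → k) (a : ∀ i, A i) :
    {z | (ν ⁻¹' {z}).indicator 1 ∉ scalingIdeal hf a}.Finite := by
  obtain ⟨q, hq, hqν⟩ := exists_comp_mem_scalingIdeal hf hB ν a
  refine hq.subset fun z hz => by_contra fun hqz => hz ?_
  have : (ν ⁻¹' {z}).indicator 1 = (fun _ => (q z)⁻¹) * ((ν ⁻¹' {z}).indicator 1 * (q ∘ ν)) := by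
    funext i; by_cases h : ν i = z <;> simp_all
  rw [this]
  exact Ideal.mul_mem_left _ _ (Ideal.mul_mem_left _ _ hqν)

theorem mem_of_forall_indicator_fiber_mem (hf : Function.Surjective f)
    (hB : Module.rank k B < #k) (ν : I → k) {a : ∀ i, A i}
    (h : ∀ z, (ν ⁻¹' {z}).indicator 1 ∈ scalingIdeal hf a) :
    f a ∈ totalAnnihilator k B := by
  classical
  obtain ⟨q, hq, hqν⟩ := exists_comp_mem_scalingIdeal hf hB ν a
  have : (1 : I → k) = (fun i => (q (ν i))⁻¹) * (q ∘ ν) +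
      ∑ z ∈ hq.toFinset, (ν ⁻¹' {z}).indicator 1 := by
    funext i; by_cases h : q (ν i) = 0 <;> simp [h, Set.indicator_apply]
  have h1 : (1 : I → k) ∈ scalingIdeal hf a :=
    this ▸ add_mem (Ideal.mul_mem_left _ _ hqν) (Ideal.sum_mem _ fun z _ => h z)
  simpa [mem_scalingIdeal] using h1

theorem noInfiniteAntichain_conullFilter [Infinite k] (hf : Function.Surjective f)
    (hB : Module.rank k B < #k) :
    (conullFilter f).NoInfiniteAntichain := by
  classical
  intro S hS
  by_contra hpos
  simp only [not_exists, inf_principal_eq_bot, mem_conullFilter, not_forall, mem_compl_iff] at hpos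
  choose a ha hZ using hpos
  let N : I → ℕ := fun i => if h : ∃ n, i ∈ S n then h.choose else 0
  have hN : ∀ n, ∀ i ∈ S n, N i = n := fun n i hi => by
    have h : ∃ n, i ∈ S n := ⟨n, hi⟩
    rw [show N i = h.choose from dif_pos h]
    by_contra hne
    exact disjoint_left.1 (hS hne) h.choose_spec hi
  let b : ∀ i, A i := fun i => a (N i) i
  have hb : ∀ n, (N ⁻¹' {n}).indicator (1 : I → k) • b = a n := fun n => by
    funext i
    by_cases h : N i = n
    · subst h; simp [b]
    · simp [h, ha n i (mt (hN n i) h)]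
  let e := Infinite.natEmbedding k
  have hfin := (finite_setOf_indicator_fiber_not_mem hf hB (e ∘ N) b).preimage e.injective.injOn
  refine infinite_univ (hfin.subset fun n _ hn => hZ n ?_)
  rwa [preimage_comp, ← image_singleton, e.injective.preimage_image, mem_scalingIdeal, hb] at hn

theorem kappaComplete_conullFilter (hf : Function.Surjective f) (hB : Module.rank k B < #k) :
    KappaComplete (Order.succ #k) (conullFilter f) := by
  classical
  intro 𝒮 h𝒮 hmem a ha
  obtain ⟨y⟩ := (Cardinal.le_def _ _).1 (Order.lt_succ_iff.1 h𝒮)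
  let ν : I → k := fun i => if h : ∃ T : 𝒮, i ∉ (T : Set I) then y h.choose else 0
  have hlabel : ∀ z i, ((ν ⁻¹' {z}).indicator (1 : I → k) • a) i ≠ 0 →
      ∃ T : 𝒮, i ∉ (T : Set I) ∧ y T = z := by
    intro z i h
    rw [indicator_one_smul_apply] at h
    split_ifs at h with hνi
    · have hi : ∃ T : 𝒮, i ∉ (T : Set I) := by simpa using mt (ha i) h
      exact ⟨hi.choose, hi.choose_spec, (dif_pos hi).symm.trans hνi⟩
    · exact absurd rfl h
  refine mem_of_forall_indicator_fiber_mem hf hB ν fun z => ?_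
  by_cases hz : ∃ T : 𝒮, y T = z
  · obtain ⟨T, rfl⟩ := hz
    refine hmem T T.2 _ fun i hiT => by_contra fun hne => ?_
    obtain ⟨T', hiT', hT'⟩ := hlabel _ i hne
    exact hiT' (y.injective hT' ▸ hiT)
  · refine univ_mem (f := conullFilter f) _ fun i _ => by_contra fun hne => hz ?_
    obtain ⟨T', -, hT'⟩ := hlabel z i hne
    exact ⟨T', hT'⟩

end

/-- Let `k` be an infinite field, `B` a (nonunital,
nonassociative) `k`-algebra with `dim_k B < card k`, and
`f : A = ∏ᵢ Aᵢ → B` a surjective `k`-algebra homomorphism.  Then the composite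
`A → B → B/Z(B)` factors through the natural map
`A → A/U 0 × … × A/U (n-1)` for some finitely many `card(k)⁺`-complete
ultrafilters `U 0, …, U (n-1)` on `I`. -/
theorem composite_factors_through_succ_card_complete_ultraproducts
    (k : Type u) [Field k] [Infinite k] {I : Type u} (A : I → Type u)
    [∀ i, NonUnitalNonAssocRing (A i)] [∀ i, Module k (A i)]
    [∀ i, SMulCommClass k (A i) (A i)] [∀ i, IsScalarTower k (A i) (A i)]
    (B : Type u) [NonUnitalNonAssocRing B] [Module k B] [SMulCommClass k B B]
    [IsScalarTower k B B] (hB : Module.rank k B < Cardinal.mk k)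
    (f : (∀ i, A i) →ₙₐ[k] B) (hf : Function.Surjective f) :
    ∃ (n : ℕ) (U : Fin n → Ultrafilter I),
      (∀ m, KappaComplete (Order.succ (Cardinal.mk k)) (U m : Filter I)) ∧
      ∃ g : (∀ m, ReducedProduct (U m : Filter I) A) → B ⧸ totalAnnihilator k B,
        (fun a => Submodule.Quotient.mk (f a) : (∀ i, A i) → B ⧸ totalAnnihilator k B)
          = g ∘ fun (a : ∀ i, A i) (m : Fin n) => reducedMk (U m : Filter I) A a := by
  obtain ⟨n, T, hT, hcover⟩ := (noInfiniteAntichain_conullFilter hf hB).exists_isAtom_iUnion_mem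
  refine ⟨n, fun m => Ultrafilter.ofAtom _ (hT m),
    fun m => (kappaComplete_conullFilter hf hB).inf_principal (T m), ?_⟩
  rw [← Function.factorsThrough_iff]
  intro a b hab
  have hconull : {i | a i = b i} ∈ conullFilter f := by
    rw [← iSup_inf_principal_of_iUnion_mem hcover, mem_iSup]
    exact fun m => Quotient.exact (congrFun hab m)
  rw [Submodule.Quotient.eq, ← map_sub]
  exact hconull _ fun i hi => sub_eq_zero.2 hi
end

section
/- If f : H = ∏_{i∈I} H_i → K is a surjective homomorphism of groups, and K has chain condition on almost direct factors (every ascending chain of almost direct factors of K terminates), then there exist finitely many ultrafilters U_0, …, U_{n-1} on I such that the composite map H → K → K/Z(K) factors through the natural map H → H/U_0 × … × H/U_{n-1}, where Z(K) denotes the center of K. -/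
universe u

open Pointwise

/-- Normal subgroups `K₀, K₁` form a pair of almost direct factors of `K` if
each is the centralizer of the other and their product `K₀K₁` is all of `K`. -/
def IsAlmostDirectFactorPairGrp {K : Type u} [Group K] (K₀ K₁ : Subgroup K) : Prop :=
  K₀.Normal ∧ K₁.Normal ∧
    K₀ = Subgroup.centralizer (K₁ : Set K) ∧
    K₁ = Subgroup.centralizer (K₀ : Set K) ∧
    (K₀ : Set K) * (K₁ : Set K) = Set.univ

/-- An almost direct factor of a group `K`. -/
def IsAlmostDirectFactorGrp {K : Type u} [Group K] (K₀ : Subgroup K) : Prop :=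
  ∃ K₁, IsAlmostDirectFactorPairGrp K₀ K₁

/-! Call `T ⊆ I` central if every element of `∏ Hᵢ` that is trivial on `T` is mapped into `Z(K)`.
These sets form a filter `F`, and `H → K/Z(K)` factors through `H/F`. For `J ⊆ I` let `A J` be the
image of the elements supported in `J`. Since `K = A J · A Jᶜ`, the double centralizer of `A J` is
an almost direct factor, and if `D` is disjoint from `J` with `A D` inside that double centralizer,
then `A D` is central. So the chain condition forbids strictly increasing sequences of subsets of
`I` modulo `F`, and by complementation also strictly decreasing ones. Then every `F`-positive set
contains an atom `M` of `𝒫(I)/F`, which makes `F ⊓ 𝓟 M` an ultrafilter, and a maximal finite union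
of atoms lies in `F`, so `F` is the supremum of finitely many of these ultrafilters. -/

open Filter

namespace Filter

variable {I : Type*} (F : Filter I)

def SSubsetMod (S T : Set I) : Prop :=
  S ⊆ T ∧ ∃ᶠ x in F, x ∈ T \ S

variable {F}

theorem ssubsetMod_compl_compl {S T : Set I} : F.SSubsetMod Tᶜ Sᶜ ↔ F.SSubsetMod S T := by
  simp only [SSubsetMod, Set.compl_subset_compl, compl_sdiff_compl]

theorem wellFounded_ssubsetMod (h : WellFounded (flip F.SSubsetMod)) :
    WellFounded F.SSubsetMod :=
  Subrelation.wf (fun hST => ssubsetMod_compl_compl.2 hST) (InvImage.wf compl h)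

theorem exists_subset_ultrafilter_eq_inf_principal (h : WellFounded F.SSubsetMod) {J : Set I}
    (hJ : ∃ᶠ x in F, x ∈ J) : ∃ M ⊆ J, ∃ U : Ultrafilter I, (U : Filter I) = F ⊓ 𝓟 M := by
  obtain ⟨M, ⟨hMJ, hM⟩, hmin⟩ :=
    h.has_min {S | S ⊆ J ∧ ∃ᶠ x in F, x ∈ S} ⟨J, Set.Subset.rfl, hJ⟩
  have : (F ⊓ 𝓟 M).NeBot := frequently_mem_iff_neBot.1 hM
  obtain ⟨U, hU⟩ := exists_ultrafilter_le (F ⊓ 𝓟 M)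
  refine ⟨M, hMJ, U, le_antisymm hU fun s hs => ?_⟩
  by_contra hsM
  have hdiff : ∃ᶠ x in F, x ∈ M \ (M ∩ s) :=
    (not_eventually.1 (mt mem_inf_principal.2 hsM)).mono fun x hx => by simpa using hx
  have hnull : ¬ ∃ᶠ x in F, x ∈ M ∩ s := fun hfreq =>
    hmin (M ∩ s) ⟨Set.inter_subset_left.trans hMJ, hfreq⟩ ⟨Set.inter_subset_left, hdiff⟩
  have hsc : sᶜ ∈ F ⊓ 𝓟 M :=
    mem_inf_principal.2 ((not_frequently.1 hnull).mono fun x hx hxM hxs => hx ⟨hxM, hxs⟩)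
  exact Ultrafilter.compl_notMem_iff.2 hs (hU hsc)

theorem exists_iUnion_mem_of_wellFounded (h : WellFounded (flip F.SSubsetMod)) :
    ∃ (n : ℕ) (M : Fin n → Set I) (U : Fin n → Ultrafilter I),
      (∀ m, (U m : Filter I) = F ⊓ 𝓟 (M m)) ∧ ⋃ m, M m ∈ F := by
  obtain ⟨W, ⟨n, M, U, hU, rfl⟩, hmax⟩ := h.has_min
    {W | ∃ (n : ℕ) (M : Fin n → Set I) (U : Fin n → Ultrafilter I),
      (∀ m, (U m : Filter I) = F ⊓ 𝓟 (M m)) ∧ W = ⋃ m, M m}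
    ⟨∅, 0, Fin.elim0, Fin.elim0, fun m => m.elim0, by simp⟩
  refine ⟨n, M, U, hU, ?_⟩
  by_contra hW
  obtain ⟨M', hM'W, U', hU'⟩ :=
    exists_subset_ultrafilter_eq_inf_principal (wellFounded_ssubsetMod h) (not_eventually.1 hW)
  have hM' : ∃ᶠ x in F, x ∈ M' := frequently_mem_iff_neBot.2 (hU' ▸ U'.neBot)
  exact hmax (M' ∪ ⋃ m, M m)
    ⟨n + 1, Fin.cons M' M, Fin.cons U' U, Fin.forall_fin_succ.2 ⟨hU', hU⟩,
      (Set.iUnion_cons M M').symm⟩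
    ⟨Set.subset_union_right, hM'.mono fun x hx => ⟨Or.inl hx, hM'W hx⟩⟩

theorem exists_le_iSup_ultrafilter_of_wellFounded (h : WellFounded (flip F.SSubsetMod)) :
    ∃ (n : ℕ) (U : Fin n → Ultrafilter I), F ≤ ⨆ m, (U m : Filter I) := by
  obtain ⟨n, M, U, hU, hcover⟩ := exists_iUnion_mem_of_wellFounded h
  refine ⟨n, U, fun T hT => ?_⟩
  have hT' : ∀ m, {x | x ∈ M m → x ∈ T} ∈ F := fun m =>
    mem_inf_principal.1 (hU m ▸ mem_iSup.1 hT m)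
  filter_upwards [hcover, iInter_mem.2 hT'] with x hxM hxT
  obtain ⟨m, hm⟩ := Set.mem_iUnion.1 hxM
  exact Set.mem_iInter.1 hxT m hm

end Filter

namespace Subgroup

theorem centralizer_centralizer_inf_centralizer_le_center {K : Type*} [Group K] {N : Subgroup K}
    (h : (N : Set K) * (centralizer (N : Set K) : Set K) = Set.univ) :
    centralizer (centralizer (N : Set K) : Set K) ⊓ centralizer (N : Set K) ≤ center K := by
  rintro x ⟨hx₁, hx₂⟩
  refine mem_center_iff.2 fun z => ?_
  obtain ⟨n, hn, c, hc, rfl⟩ := h.symm ▸ Set.mem_univ z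
  exact (Commute.mul_left (hx₂ n hn) (hx₁ c hc)).eq

theorem isAlmostDirectFactorGrp_centralizer_centralizer {K : Type u} [Group K] {N : Subgroup K}
    (hN : N.Normal) (h : (N : Set K) * (centralizer (N : Set K) : Set K) = Set.univ) :
    IsAlmostDirectFactorGrp (centralizer (centralizer (N : Set K) : Set K)) :=
  ⟨centralizer N, inferInstance, inferInstance, rfl,
    SetLike.ext' (Set.centralizer_centralizer_centralizer _).symm,
    Set.eq_univ_of_univ_subset (h ▸ Set.mul_subset_mul_right Set.subset_centralizer_centralizer)⟩

end Subgroup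

open Subgroup

section ProductGroup

variable {I : Type*} {H : I → Type*} [∀ i, Group (H i)] {K : Type*} [Group K]
  (f : (∀ i, H i) →* K)

theorem Set.piecewise_one_mul_piecewise_one (J : Set I) [∀ i, Decidable (i ∈ J)] (a : ∀ i, H i) :
    J.piecewise a 1 * J.piecewise (1 : ∀ i, H i) a = a := by
  rw [← Set.piecewise_mul, mul_one, one_mul, Set.piecewise_same]

def supportedImage (J : Set I) : Subgroup K :=
  (Subgroup.pi Jᶜ fun _ => ⊥).map f

theorem mem_supportedImage_of {J : Set I} {a : ∀ i, H i} (ha : ∀ i ∉ J, a i = 1) :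
    f a ∈ supportedImage f J :=
  mem_map_of_mem f ha

theorem supportedImage_mono {J J' : Set I} (h : J ⊆ J') :
    supportedImage f J ≤ supportedImage f J' :=
  map_mono fun _ ha i hi => ha i fun hJ => hi (h hJ)

theorem supportedImage_normal (hf : Function.Surjective f) (J : Set I) :
    (supportedImage f J).Normal :=
  Normal.map ⟨fun a ha g i hi => by simp [show a i = 1 from ha i hi]⟩ f hf

theorem supportedImage_le_centralizer {J J' : Set I} (hJ : Disjoint J J') :
    supportedImage f J' ≤ centralizer (supportedImage f J : Set K) := by
  rintro _ ⟨a, ha, rfl⟩ _ ⟨b, hb, rfl⟩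
  rw [← map_mul, ← map_mul, (Pi.commute_iff.2 fun i => ?_).eq]
  by_cases hi : i ∈ J
  · exact (ha i (Set.disjoint_left.1 hJ hi) : a i = 1) ▸ Commute.one_right _
  · exact (hb i hi : b i = 1) ▸ Commute.one_left _

theorem supportedImage_mul_centralizer (hf : Function.Surjective f) (J : Set I) :
    (supportedImage f J : Set K) * (centralizer (supportedImage f J : Set K) : Set K) =
      Set.univ := by
  refine Set.eq_univ_of_forall fun k => ?_
  obtain ⟨a, rfl⟩ := hf k
  classical
  rw [← Set.piecewise_one_mul_piecewise_one J a, map_mul]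
  exact Set.mul_mem_mul
    (mem_supportedImage_of f fun i hi => Set.piecewise_eq_of_notMem _ _ _ hi)
    (supportedImage_le_centralizer f disjoint_compl_right
      (mem_supportedImage_of f fun i hi => Set.piecewise_eq_of_mem _ _ _ (not_not.1 hi)))

def centralFilter : Filter I where
  sets := {T | ∀ a : ∀ i, H i, (∀ i ∈ T, a i = 1) → f a ∈ center K}
  univ_sets a ha := by
    rw [show a = 1 from funext fun i => ha i trivial, map_one]
    exact one_mem _
  sets_of_superset hS hST a ha := hS a fun i hi => ha i (hST hi)
  inter_sets {S T} hS hT a ha := by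
    classical
    rw [← Set.piecewise_one_mul_piecewise_one S a, map_mul]
    refine mul_mem (hT _ fun i hi => ?_)
      (hS _ fun i hi => Set.piecewise_eq_of_mem _ _ _ hi)
    by_cases hiS : i ∈ S
    · rw [Set.piecewise_eq_of_mem _ _ _ hiS, ha i ⟨hiS, hi⟩]
    · exact Set.piecewise_eq_of_notMem _ _ _ hiS

theorem mk_eq_mk_of_mem_centralFilter {a b : ∀ i, H i} (h : {i | a i = b i} ∈ centralFilter f) :
    (f a : K ⧸ center K) = f b := by
  rw [QuotientGroup.eq, ← map_inv, ← map_mul]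
  exact h _ fun i (hi : a i = b i) => by simp [hi]

theorem compl_mem_centralFilter (hf : Function.Surjective f) {J D : Set I} (hJD : Disjoint J D)
    (hD : supportedImage f D ≤ centralizer (centralizer (supportedImage f J : Set K) : Set K)) :
    Dᶜ ∈ centralFilter f := fun a ha =>
  have hfa : f a ∈ supportedImage f D := mem_supportedImage_of f ha
  centralizer_centralizer_inf_centralizer_le_center (supportedImage_mul_centralizer f hf J)
    ⟨hD hfa, supportedImage_le_centralizer f hJD hfa⟩

end ProductGroup

theorem wellFounded_flip_ssubsetMod_centralFilter {I : Type*} {H : I → Type*}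
    [∀ i, Group (H i)] {K : Type u} [Group K] {f : (∀ i, H i) →* K} (hf : Function.Surjective f)
    (hcc : ∀ c : ℕ → Subgroup K, Monotone c →
      (∀ j, IsAlmostDirectFactorGrp (c j)) → ∃ N, ∀ j ≥ N, c j = c N) :
    WellFounded (flip (centralFilter f).SSubsetMod) := by
  refine wellFounded_iff_isEmpty_descending_chain.2 ⟨fun ⟨S, hS⟩ => ?_⟩
  have hmono : Monotone S := monotone_nat_of_le_succ fun n => (hS n).1
  obtain ⟨N, hN⟩ :=
    hcc (fun n => centralizer (centralizer (supportedImage f (S n) : Set K) : Set K))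
    (fun m n hmn => centralizer_le (centralizer_le (supportedImage_mono f (hmono hmn))))
    (fun n => isAlmostDirectFactorGrp_centralizer_centralizer (supportedImage_normal f hf _)
      (supportedImage_mul_centralizer f hf _))
  have hstable : supportedImage f (S (N + 1) \ S N) ≤
      centralizer (centralizer (supportedImage f (S N) : Set K) : Set K) :=
    calc supportedImage f (S (N + 1) \ S N)
        ≤ supportedImage f (S (N + 1)) := supportedImage_mono f Set.sdiff_subset
      _ ≤ centralizer (centralizer (supportedImage f (S (N + 1)) : Set K) : Set K) :=
        le_centralizer_iff.2 le_rfl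
      _ = centralizer (centralizer (supportedImage f (S N) : Set K) : Set K) :=
        hN (N + 1) N.le_succ
  exact (hS N).2 (compl_mem_centralFilter f hf Set.disjoint_sdiff_right hstable)

/-- If `f : H = ∏ᵢ Hᵢ → K` is a surjective homomorphism of
groups, and `K` has chain condition on almost direct factors (every ascending
chain of almost direct factors of `K` terminates), then there are finitely
many ultrafilters `U 0, …, U (n-1)` on `I` such that the composite
`H → K → K/Z(K)` factors through the natural map
`H → H/U 0 × … × H/U (n-1)`, where `Z(K)` is the center of `K`. -/
theorem composite_factors_of_chain_condition_group
    {I : Type u} (H : I → Type u) [∀ i, Group (H i)]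
    (K : Type u) [Group K]
    (f : (∀ i, H i) →* K) (hf : Function.Surjective f)
    (hcc : ∀ c : ℕ → Subgroup K, Monotone c →
      (∀ j, IsAlmostDirectFactorGrp (c j)) → ∃ N, ∀ j ≥ N, c j = c N) :
    ∃ (n : ℕ) (U : Fin n → Ultrafilter I)
      (g : (∀ m, ReducedProduct (U m : Filter I) H) → K ⧸ Subgroup.center K),
      (fun a => QuotientGroup.mk (f a) :
          (∀ i, H i) → K ⧸ Subgroup.center K)
        = g ∘ fun (a : ∀ i, H i) (m : Fin n) => reducedMk (U m : Filter I) H a := by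
  obtain ⟨n, U, hU⟩ := exists_le_iSup_ultrafilter_of_wellFounded
    (wellFounded_flip_ssubsetMod_centralFilter hf hcc)
  have hfac : Function.FactorsThrough (fun a => (f a : K ⧸ center K))
      fun a m => reducedMk (U m : Filter I) H a := fun a b hab =>
    mk_eq_mk_of_mem_centralFilter f (hU (mem_iSup.2 fun m => Quotient.exact (congrFun hab m)))
  exact ⟨n, U, Function.extend _ _ 1, funext fun a => (hfac.extend_apply 1 a).symm⟩
end

section
/- (Łoś–Eda Theorem) Let R be an associative unital ring, (N_i)_{i∈I} a family of R-modules, and M a slender R-module. Then any R-module homomorphism from the direct product N = ∏_{i∈I} N_i to M factors through the natural map of N to a finite direct product of ultraproducts, N/U_0 × … × N/U_{n-1}, where U_0, …, U_{n-1} are countably complete ultrafilters on I. -/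
universe u

/-- A filter is countably complete if it is closed under countable
intersections of its members. -/
def CountablyComplete {I : Type u} (F : Filter I) : Prop :=
  ∀ s : ℕ → Set I, (∀ n, s n ∈ F) → (⋂ n, s n) ∈ F

/-- An `R`-module `M` is slender if every `R`-module homomorphism from a
countable direct product of `R`-modules `∏_{i ∈ ℕ} Nᵢ` into `M` annihilates
all but finitely many of the `Nᵢ` (each `Nᵢ` being identified with the
submodule of elements of the product supported at `i`). -/
def IsSlender (R : Type u) [Ring R] (M : Type u) [AddCommGroup M]
    [Module R M] : Prop :=
  ∀ (N : ℕ → Type u) [∀ i, AddCommGroup (N i)] [∀ i, Module R (N i)]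
    (h : ((i : ℕ) → N i) →ₗ[R] M),
    ∃ s : Finset ℕ, ∀ i ∉ s, ∀ x : N i, h (Pi.single i x) = 0

section Aux
variable {R : Type u} [Ring R] {I : Type u} {N : I → Type u}
  [∀ i, AddCommGroup (N i)] [∀ i, Module R (N i)]
  {M : Type u} [AddCommGroup M] [Module R M]

def IsSlender' (R : Type u) [Ring R] (M : Type u) [AddCommGroup M]
    [Module R M] : Prop :=
  ∀ (N : ℕ → Type u) [∀ i, AddCommGroup (N i)] [∀ i, Module R (N i)]
    (h : ((i : ℕ) → N i) →ₗ[R] M),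
    ∃ s : Finset ℕ, ∀ i ∉ s, ∀ x : N i, h (Pi.single i x) = 0

/-- `S` is null for `h` if `h` kills every element supported in `S`. -/
def LENull (h : ((i : I) → N i) →ₗ[R] M) (S : Set I) : Prop :=
  ∀ a : ∀ i, N i, (∀ i, i ∉ S → a i = 0) → h a = 0

variable (h : ((i : I) → N i) →ₗ[R] M)

lemma LENull.mono {S T : Set I} (hST : T ⊆ S) (hS : LENull h S) : LENull h T :=
  fun a ha => hS a fun i hi => ha i fun hT => hi (hST hT)

lemma LENull.empty : LENull h (∅ : Set I) := by
  intro a ha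
  have : a = 0 := funext fun i => ha i (Set.notMem_empty i)
  simp [this]

lemma LENull.union {S T : Set I} (hS : LENull h S) (hT : LENull h T) :
    LENull h (S ∪ T) := by
  classical
  intro a ha
  set b : ∀ i, N i := fun i => if i ∈ S then a i else 0 with hb
  have hsplit : a = b + (a - b) := by abel
  have h1 : h b = 0 := hS b (fun i hi => by simp [hb, hi])
  have h2 : h (a - b) = 0 := by
    refine hT (a - b) (fun i hi => ?_)
    by_cases hiS : i ∈ S
    · simp [hb, hiS]
    · have : a i = 0 := ha i (by simp [hiS, hi])
      simp [hb, hiS, this]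
  calc h a = h (b + (a - b)) := by rw [← hsplit]
    _ = h b + h (a - b) := map_add _ _ _
    _ = 0 := by rw [h1, h2, add_zero]

/-- The submodule of functions supported on `T`. -/
def suppSub (T : Set I) : Submodule R (∀ i, N i) where
  carrier := {a | ∀ i, i ∉ T → a i = 0}
  add_mem' := fun {a b} ha hb i hi => by
    simp [Pi.add_apply, ha i hi, hb i hi]
  zero_mem' := fun i _ => rfl
  smul_mem' := fun r a ha i hi => by simp [Pi.smul_apply, ha i hi]

end Aux

section Aux2
variable {R : Type u} [Ring R] {I : Type u} {N : I → Type u}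
  [∀ i, AddCommGroup (N i)] [∀ i, Module R (N i)]
  {M : Type u} [AddCommGroup M] [Module R M]
  (h : ((i : I) → N i) →ₗ[R] M)

lemma null_tail (hM : IsSlender' R M) (S : ℕ → Set I)
    (hd : Pairwise (Function.onFun Disjoint S)) :
    ∃ n₀ : ℕ, LENull h {i | ∃ m, n₀ ≤ m ∧ i ∈ S m} := by
  classical
  set T : ℕ → Set I := fun n => {i | ∃ m, n ≤ m ∧ i ∈ S m} with hT
  set σ : ((n : ℕ) → suppSub (R := R) (N := N) (T n)) →ₗ[R] (∀ i, N i) :=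
    { toFun := fun c i => if hi : ∃ m, i ∈ S m then
        ∑ n ∈ Finset.range (hi.choose + 1), (c n : ∀ i, N i) i else 0
      map_add' := fun c d => funext fun i => by
        by_cases hi : ∃ m, i ∈ S m <;>
          simp [hi, Finset.sum_add_distrib]
      map_smul' := fun r c => funext fun i => by
        by_cases hi : ∃ m, i ∈ S m <;>
          simp [hi, Finset.smul_sum] } with hσ
  obtain ⟨s, hs⟩ := hM (fun n => suppSub (R := R) (N := N) (T n)) (h.comp σ)
  refine ⟨s.sup id + 1, ?_⟩
  set n₀ := s.sup id + 1 with hn₀def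
  have hn₀ : n₀ ∉ s := fun hmem => by
    have := Finset.le_sup (f := id) hmem
    simp only [id] at this
    omega
  intro a ha
  have haT : a ∈ suppSub (R := R) (N := N) (T n₀) := ha
  set x : (n : ℕ) → suppSub (R := R) (N := N) (T n) :=
    Pi.single n₀ (⟨a, haT⟩ : suppSub (R := R) (N := N) (T n₀)) with hx
  have key : σ x = a := by
    funext i
    by_cases hi : ∃ m, i ∈ S m
    · simp only [hσ, LinearMap.coe_mk, AddHom.coe_mk, dif_pos hi]
      have hsum := Finset.sum_eq_single (s := Finset.range (hi.choose + 1))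
        (f := fun n => ((x n : ∀ i, N i)) i) n₀
        (fun b _ hb => by simp [hx, Pi.single_eq_of_ne hb])
        (fun hn => by
          simp only [hx, Pi.single_eq_same]
          show a i = 0
          by_contra hne
          have hiT : i ∈ T n₀ := by
            by_contra hiT
            exact hne (ha i hiT)
          obtain ⟨m, hm, him⟩ := hiT
          have : m = hi.choose := by
            by_contra hmm
            exact (Set.disjoint_left.mp (hd hmm)) him hi.choose_spec
          rw [Finset.mem_range] at hn
          omega)
      rw [hsum]
      simp [hx, Pi.single_eq_same]
    · simp only [hσ, LinearMap.coe_mk, AddHom.coe_mk, dif_neg hi]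
      have : i ∉ T n₀ := fun ⟨m, _, him⟩ => hi ⟨m, him⟩
      exact (ha i this).symm
  have := hs n₀ hn₀ (⟨a, haT⟩ : suppSub (R := R) (N := N) (T n₀))
  rw [LinearMap.comp_apply, ← hx, key] at this
  exact this

end Aux2

section Aux3
variable {R : Type u} [Ring R] {I : Type u} {N : I → Type u}
  [∀ i, AddCommGroup (N i)] [∀ i, Module R (N i)]
  {M : Type u} [AddCommGroup M] [Module R M]
  (h : ((i : I) → N i) →ₗ[R] M)

lemma null_biUnion_lt (S : ℕ → Set I) (k : ℕ) (hS : ∀ n < k, LENull h (S n)) :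
    LENull h (⋃ n, ⋃ _ : n < k, S n) := by
  induction k with
  | zero => simpa using LENull.empty h
  | succ k ih =>
    rw [Set.biUnion_lt_succ]
    exact LENull.union h (ih fun n hn => hS n (by omega)) (hS k (by omega))

lemma null_iUnion (hM : IsSlender' R M) (S : ℕ → Set I)
    (hS : ∀ n, LENull h (S n)) : LENull h (⋃ n, S n) := by
  obtain ⟨n₀, hn₀⟩ := null_tail h hM (disjointed S) (disjoint_disjointed S)
  have hcov : (⋃ n, S n) ⊆
      (⋃ n, ⋃ _ : n < n₀, disjointed S n) ∪ {i | ∃ m, n₀ ≤ m ∧ i ∈ disjointed S m} := by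
    intro i hi
    have : i ∈ ⋃ n, disjointed S n := by
      rw [← Set.iSup_eq_iUnion, iSup_disjointed, Set.iSup_eq_iUnion]
      exact hi
    obtain ⟨m, hm⟩ := Set.mem_iUnion.mp this
    by_cases hmn : m < n₀
    · exact Or.inl (Set.mem_iUnion₂.mpr ⟨m, hmn, hm⟩)
    · exact Or.inr ⟨m, by omega, hm⟩
  refine LENull.mono h hcov (LENull.union h ?_ hn₀)
  exact null_biUnion_lt h _ n₀ (fun n _ => LENull.mono h (disjointed_le S n) (hS n))

lemma exists_null_of_disjoint (hM : IsSlender' R M) (S : ℕ → Set I)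
    (hd : Pairwise (Function.onFun Disjoint S)) : ∃ n, LENull h (S n) := by
  obtain ⟨n₀, hn₀⟩ := null_tail h hM S hd
  have hsub : S n₀ ⊆ {i | ∃ m, n₀ ≤ m ∧ i ∈ S m} := fun i hi => ⟨n₀, le_refl _, hi⟩
  exact ⟨n₀, LENull.mono h hsub hn₀⟩

/-- An atom: a non-null set all of whose subsets are null or co-null in it. -/
def LEAtom (A : Set I) : Prop :=
  ¬ LENull h A ∧ ∀ T ⊆ A, LENull h T ∨ LENull h (A \ T)

lemma exists_atom (hM : IsSlender' R M) {S : Set I} (hS : ¬ LENull h S) :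
    ∃ A, A ⊆ S ∧ LEAtom h A := by
  classical
  by_contra hno
  push_neg at hno
  have split : ∀ T, T ⊆ S → ¬ LENull h T →
      ∃ T', T' ⊆ T ∧ ¬ LENull h T' ∧ ¬ LENull h (T \ T') := by
    intro T hTS hT
    have hnA := hno T hTS
    rw [LEAtom, not_and] at hnA
    have := hnA hT
    push_neg at this
    obtain ⟨T', hT'T, h1, h2⟩ := this
    exact ⟨T', hT'T, h1, h2⟩
  choose! f hf1 hf2 hf3 using split
  set C : ℕ → Set I := fun n => Nat.rec S (fun _ Cn => Cn \ f Cn) n with hC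
  have hCstep : ∀ n, C (n + 1) = C n \ f (C n) := fun n => rfl
  have hCind : ∀ n, C n ⊆ S ∧ ¬ LENull h (C n) := by
    intro n
    induction n with
    | zero => exact ⟨le_refl _, hS⟩
    | succ n ih =>
      rw [hCstep]
      exact ⟨Set.diff_subset.trans ih.1, hf3 (C n) ih.1 ih.2⟩
  have hanti : Antitone C := antitone_nat_of_succ_le (fun n => by
    rw [hCstep]; exact Set.diff_subset)
  have hkey : ∀ m n, m < n → Disjoint (f (C m)) (f (C n)) := by
    intro m n hmn
    rw [Set.disjoint_left]
    intro x hxm hxn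
    have hsub : f (C n) ⊆ C (m + 1) :=
      (hf1 (C n) (hCind n).1 (hCind n).2).trans (hanti hmn)
    have := hsub hxn
    rw [hCstep] at this
    exact this.2 hxm
  have hdisj : Pairwise (Function.onFun Disjoint (fun n => f (C n))) := by
    intro m n hmn
    rcases lt_or_gt_of_ne hmn with hlt | hgt
    · exact hkey m n hlt
    · exact (hkey n m hgt).symm
  obtain ⟨n, hn⟩ := exists_null_of_disjoint h hM _ hdisj
  exact hf2 (C n) (hCind n).1 (hCind n).2 hn

lemma exists_decomp (hM : IsSlender' R M) :
    ∃ (n : ℕ) (A : ℕ → Set I),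
      (∀ k, k < n → LEAtom h (A k)) ∧
      LENull h {i | ∀ k, k < n → i ∉ A k} := by
  classical
  have ex : ∀ S : Set I, ¬ LENull h S → ∃ A, A ⊆ S ∧ LEAtom h A :=
    fun S hS => exists_atom h hM hS
  choose! F hF using ex
  set E : ℕ → Set I := fun n => Nat.rec Set.univ (fun _ En => En \ F En) n with hE
  have hEstep : ∀ n, E (n + 1) = E n \ F (E n) := fun n => rfl
  have hanti : Antitone E := antitone_nat_of_succ_le (fun n => by
    rw [hEstep]; exact Set.diff_subset)
  have hkey : ∀ m n, m < n → ¬ LENull h (E n) →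
      Disjoint (F (E m)) (F (E n)) := by
    intro m n hmn hEn
    rw [Set.disjoint_left]
    intro x hxm hxn
    have hsub : F (E n) ⊆ E (m + 1) := (hF (E n) hEn).1.trans (hanti hmn)
    have := hsub hxn
    rw [hEstep] at this
    exact this.2 hxm
  have hstop : ∃ n, LENull h (E n) := by
    by_contra hall
    push_neg at hall
    have hdisj : Pairwise (Function.onFun Disjoint (fun n => F (E n))) := by
      intro m n hmn
      rcases lt_or_gt_of_ne hmn with hlt | hgt
      · exact hkey m n hlt (hall n)
      · exact (hkey n m hgt (hall m)).symm
    obtain ⟨n, hn⟩ := exists_null_of_disjoint h hM _ hdisj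
    exact (hF (E n) (hall n)).2.1 hn
  refine ⟨Nat.find hstop, fun k => F (E k), ?_, ?_⟩
  · intro k hk
    exact (hF (E k) (Nat.find_min hstop hk)).2
  · have hmem : ∀ j, ∀ i : I, (∀ k, k < j → i ∉ F (E k)) → i ∈ E j := by
      intro j
      induction j with
      | zero => intro i _; trivial
      | succ j ih =>
        intro i hi
        rw [hEstep]
        exact ⟨ih i (fun k hk => hi k (by omega)), hi j (by omega)⟩
    exact LENull.mono h (fun i hi => hmem _ i hi) (Nat.find_spec hstop)

end Aux3

section Aux4
variable {R : Type u} [Ring R] {I : Type u} {N : I → Type u}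
  [∀ i, AddCommGroup (N i)] [∀ i, Module R (N i)]
  {M : Type u} [AddCommGroup M] [Module R M]
  (h : ((i : I) → N i) →ₗ[R] M)

/-- The filter of sets whose complement in the atom `A` is null. -/
def atomFilter (A : Set I) : Filter I where
  sets := {S | LENull h (A \ S)}
  univ_sets := by
    have : A \ Set.univ = ∅ := by simp
    show LENull h (A \ Set.univ)
    rw [this]; exact LENull.empty h
  sets_of_superset := by
    intro S T hS hST
    exact LENull.mono h (Set.diff_subset_diff_right hST) hS
  inter_sets := by
    intro S T hS hT
    show LENull h (A \ (S ∩ T))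
    rw [Set.diff_inter]
    exact LENull.union h hS hT

lemma mem_atomFilter {A S : Set I} :
    S ∈ atomFilter h A ↔ LENull h (A \ S) := Iff.rfl

/-- The ultrafilter attached to an atom. -/
noncomputable def atomUF (A : Set I) (hA : LEAtom h A) : Ultrafilter I :=
  Ultrafilter.ofComplNotMemIff (atomFilter h A) (by
    intro S
    rw [mem_atomFilter, mem_atomFilter]
    have hAS : A \ Sᶜ = A ∩ S := by ext i; simp
    constructor
    · intro hne
      rw [hAS] at hne
      rcases hA.2 (A ∩ S) Set.inter_subset_left with hnull | hnull
      · exact absurd hnull hne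
      · rwa [Set.diff_self_inter] at hnull
    · intro hS hne
      rw [hAS] at hne
      apply hA.1
      have : A = (A \ S) ∪ (A ∩ S) := by
        rw [Set.diff_union_inter]
      rw [this] at *
      exact LENull.union h hS hne)

lemma mem_atomUF {A S : Set I} (hA : LEAtom h A) :
    S ∈ (atomUF h A hA : Filter I) ↔ LENull h (A \ S) := Iff.rfl

lemma atomUF_countablyComplete (hM : IsSlender' R M) {A : Set I}
    (hA : LEAtom h A) : CountablyComplete (atomUF h A hA : Filter I) := by
  intro s hs
  rw [mem_atomUF]
  have : A \ ⋂ n, s n = ⋃ n, A \ s n := Set.diff_iInter A s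
  rw [this]
  exact null_iUnion h hM _ (fun n => (mem_atomUF h hA).mp (hs n))

end Aux4

/-- Łoś–Eda Theorem: Let `R` be an associative unital ring,
`(Nᵢ)_{i ∈ I}` a family of `R`-modules, and `M` a slender `R`-module.  Then
every `R`-module homomorphism from `N = ∏ᵢ Nᵢ` to `M` factors through the
natural map of `N` to a finite direct product of ultraproducts
`N/U 0 × … × N/U (n-1)`, where `U 0, …, U (n-1)` are countably complete
ultrafilters on `I`. -/
theorem los_eda (R : Type u) [Ring R] {I : Type u} (N : I → Type u)
    [∀ i, AddCommGroup (N i)] [∀ i, Module R (N i)]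
    (M : Type u) [AddCommGroup M] [Module R M] (hM : IsSlender R M)
    (h : ((i : I) → N i) →ₗ[R] M) :
    ∃ (n : ℕ) (U : Fin n → Ultrafilter I),
      (∀ m, CountablyComplete (U m : Filter I)) ∧
      ∃ g : (∀ m, ReducedProduct (U m : Filter I) N) → M,
        ⇑h = g ∘ fun (a : ∀ i, N i) (m : Fin n) => reducedMk (U m : Filter I) N a := by
  classical
  have hM' : IsSlender' R M := hM
  obtain ⟨n, A, hatom, hnull⟩ := exists_decomp h hM'
  refine ⟨n, fun m => atomUF h (A m) (hatom m m.isLt), ?_, ?_⟩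
  · intro m
    exact atomUF_countablyComplete h hM' (hatom m m.isLt)
  · -- key lemma: h identifies elements equal modulo all the ultrafilters
    have hkey : ∀ a b : ∀ i, N i,
        (∀ m : Fin n, {i | a i = b i} ∈
          (atomUF h (A m) (hatom m m.isLt) : Filter I)) → h a = h b := by
      intro a b hab
      set Z : Set I := {i | a i = b i} with hZ
      have hW : LENull h ((⋃ k, ⋃ _ : k < n, A k \ Z) ∪ {i | ∀ k, k < n → i ∉ A k}) := by
        refine LENull.union h ?_ hnull
        refine null_biUnion_lt h _ n (fun k hk => ?_)
        exact (mem_atomUF h (hatom k hk)).mp (hab ⟨k, hk⟩)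
      have hsub : h (a - b) = 0 := by
        refine hW (a - b) (fun i hi => ?_)
        by_cases hiZ : i ∈ Z
        · simp [Pi.sub_apply, sub_eq_zero.mpr hiZ]
        · exfalso
          apply hi
          by_cases hiA : ∃ k, k < n ∧ i ∈ A k
          · obtain ⟨k, hk, hik⟩ := hiA
            exact Or.inl (Set.mem_iUnion₂.mpr ⟨k, hk, hik, hiZ⟩)
          · push_neg at hiA
            exact Or.inr hiA
      have := map_sub h a b
      rw [hsub] at this
      exact (sub_eq_zero.mp this.symm)
    refine ⟨fun x => if hx : ∃ a : ∀ i, N i,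
        (fun m : Fin n => reducedMk (atomUF h (A m) (hatom m m.isLt) : Filter I) N a) = x
      then h hx.choose else 0, ?_⟩
    funext a
    have hx : ∃ b : ∀ i, N i,
        (fun m : Fin n => reducedMk (atomUF h (A m) (hatom m m.isLt) : Filter I) N b) =
        (fun m : Fin n => reducedMk (atomUF h (A m) (hatom m m.isLt) : Filter I) N a) :=
      ⟨a, rfl⟩
    simp only [Function.comp_apply]
    rw [dif_pos hx]
    refine hkey _ _ (fun m => ?_)
    have hspec := congrFun hx.choose_spec m
    have hrel := Quotient.exact hspec
    exact (redSetoid (atomUF h (A ↑m) (hatom ↑m m.isLt) : Filter I) N).iseqv.symm hrel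
end

section
/- Let F be a filter on a set I, and X a finite set with more than one element. Then the following are equivalent: (1) F is the intersection of finitely many ultrafilters on I; (2) the reduced power X^I/F is finite; (3) the reduced power X^I/F has cardinality < 2^{ℵ0}. -/
universe u

namespace RedPow17

variable {I : Type u} (F : Filter I)

/-- A set is positive if its complement is not in the filter. -/
def Pos (A : Set I) : Prop := Aᶜ ∉ F

variable {F}

lemma Pos.mono {A B : Set I} (h : Pos F A) (hAB : A ⊆ B) : Pos F B :=
  fun hB => h (Filter.mem_of_superset hB (Set.compl_subset_compl.2 hAB))

lemma pos_union {A B : Set I} (h : Pos F (A ∪ B)) : Pos F A ∨ Pos F B := by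
  by_contra hc
  push_neg at hc
  simp only [Pos, not_not] at hc
  exact h (by rw [Set.compl_union]; exact Filter.inter_mem hc.1 hc.2)

lemma pos_subset_union {A B C : Set I} (h : Pos F A) (hsub : A ⊆ B ∪ C) :
    Pos F B ∨ Pos F C := pos_union (h.mono hsub)

/-- An atom: a positive set that cannot be split into two positive pieces. -/
def IsAtomic (A : Set I) : Prop :=
  Pos F A ∧ ∀ B : Set I, ¬ (Pos F (A ∩ B) ∧ Pos F (A \ B))

lemma IsAtomic.pos {A : Set I} (h : IsAtomic (F := F) A) : Pos F A := h.1

lemma IsAtomic.or {A : Set I} (h : IsAtomic (F := F) A) (s : Set I) :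
    Pos F (A ∩ s) ∨ Pos F (A \ s) :=
  pos_subset_union h.1 (by
    intro i hi
    by_cases his : i ∈ s
    · exact Or.inl ⟨hi, his⟩
    · exact Or.inr ⟨hi, his⟩)

/-- The ultrafilter associated to an atom. -/
noncomputable def atomUltrafilter {A : Set I} (h : IsAtomic (F := F) A) : Ultrafilter I :=
  Ultrafilter.ofComplNotMemIff
    { sets := {B | Pos F (A ∩ B)}
      univ_sets := by simpa [Set.inter_univ] using h.1
      sets_of_superset := fun {B C} hB hBC =>
        hB.mono (Set.inter_subset_inter_right _ hBC)
      inter_sets := by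
        intro B C hB hC
        simp only [Set.mem_setOf_eq] at *
        intro hcon
        have hAC : ¬ Pos F (A \ C) := fun hx => h.2 C ⟨hC, hx⟩
        have : Pos F (A ∩ (B ∩ C)) ∨ Pos F (A \ C) := by
          refine pos_subset_union hB ?_
          intro i hi
          by_cases hic : i ∈ C
          · exact Or.inl ⟨hi.1, hi.2, hic⟩
          · exact Or.inr ⟨hi.1, hic⟩
        tauto }
    (by
      intro s
      change ¬ Pos F (A ∩ sᶜ) ↔ Pos F (A ∩ s)
      rw [show A ∩ sᶜ = A \ s from rfl]
      constructor
      · intro hns; rcases h.or s with hs | hs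
        · exact hs
        · exact absurd hs hns
      · intro hs hds; exact h.2 s ⟨hs, hds⟩)

lemma mem_atomUltrafilter {A : Set I} (h : IsAtomic (F := F) A) (s : Set I) :
    s ∈ atomUltrafilter h ↔ Pos F (A ∩ s) := Iff.rfl


/-- The hypothesis that there is no infinite pairwise disjoint family of positive sets. -/
def NoInfFam (F : Filter I) : Prop :=
  ¬ ∃ f : ℕ → Set I, Pairwise (Function.onFun Disjoint f) ∧ ∀ n, Pos F (f n)

lemma exists_atomic_subset (H : NoInfFam F) {A : Set I} (hA : Pos F A) :
    ∃ B, B ⊆ A ∧ IsAtomic (F := F) B := by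
  by_contra hc
  push_neg at hc
  have key : ∀ C : {C : Set I // Pos F C ∧ C ⊆ A},
      ∃ D : {C : Set I // Pos F C ∧ C ⊆ A}, D.1 ⊆ C.1 ∧ Pos F (C.1 \ D.1) := by
    rintro ⟨C, hC, hCA⟩
    have hna : ¬ IsAtomic (F := F) C := hc C hCA
    rw [IsAtomic] at hna
    push_neg at hna
    obtain ⟨B, hB1, hB2⟩ := hna hC
    exact ⟨⟨C ∩ B, hB1, (Set.inter_subset_left).trans hCA⟩,
      Set.inter_subset_left, by
        simpa [Set.diff_self_inter] using hB2⟩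
  choose st hst1 hst2 using key
  set g : ℕ → {C : Set I // Pos F C ∧ C ⊆ A} :=
    fun n => st^[n] ⟨A, hA, subset_rfl⟩ with hg
  have hgsucc : ∀ n, g (n + 1) = st (g n) := by
    intro n; rw [hg]; exact Function.iterate_succ_apply' _ _ _
  have hmono : ∀ m n, m ≤ n → (g n).1 ⊆ (g m).1 := by
    intro m n hmn
    induction n with
    | zero => simp_all
    | succ k ih =>
      rcases Nat.lt_or_ge m (k+1) with h | h
      · have h1 : (g (k+1)).1 ⊆ (g k).1 := by rw [hgsucc]; exact hst1 (g k)
        exact h1.trans (ih (Nat.lt_succ_iff.mp h))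
      · have : m = k + 1 := le_antisymm hmn h
        subst this; rfl
  apply H
  refine ⟨fun n => (g n).1 \ (g (n+1)).1, ?_, ?_⟩
  · have hlt : ∀ m n, m < n →
        Disjoint ((g m).1 \ (g (m+1)).1) ((g n).1 \ (g (n+1)).1) := by
      intro m n hmn
      rw [Set.disjoint_left]
      rintro i ⟨_, him⟩ ⟨hin, _⟩
      exact him (hmono (m+1) n hmn hin)
    intro m n hmn
    rcases Nat.lt_or_ge m n with h | h
    · exact hlt m n h
    · exact (hlt n m (lt_of_le_of_ne h (Ne.symm hmn))).symm
  · intro n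
    show Pos F ((g n).1 \ (g (n+1)).1)
    rw [hgsucc]
    exact hst2 (g n)


lemma Pos.nonempty {A : Set I} (h : Pos F A) : A.Nonempty := by
  rcases A.eq_empty_or_nonempty with rfl | h'
  · exact absurd (by simpa using Filter.univ_mem) h
  · exact h'

theorem isSup_of_noInfFam (H : NoInfFam F) :
    ∃ (n : ℕ) (U : Fin n → Ultrafilter I), F = ⨆ m, (U m : Filter I) := by
  classical
  set 𝒜 : Set (Set (Set I)) :=
    {S | (∀ A ∈ S, IsAtomic (F := F) A) ∧ S.Pairwise (fun A B => Disjoint A B)} with h𝒜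
  obtain ⟨S, hS⟩ : ∃ S, Maximal (· ∈ 𝒜) S := by
    apply zorn_subset
    intro c hc hchain
    refine ⟨⋃₀ c, ⟨?_, ?_⟩, fun s hs => Set.subset_sUnion_of_mem hs⟩
    · rintro A ⟨s, hs, hAs⟩
      exact (hc hs).1 A hAs
    · rintro A ⟨s, hs, hAs⟩ B ⟨t, ht, hBt⟩ hAB
      rcases eq_or_ne s t with rfl | hst
      · exact (hc hs).2 hAs hBt hAB
      · rcases hchain hs ht hst with h | h
        · exact (hc ht).2 (h hAs) hBt hAB
        · exact (hc hs).2 hAs (h hBt) hAB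
  have hSmem : S ∈ 𝒜 := hS.1
  have hSatom : ∀ A ∈ S, IsAtomic (F := F) A := hSmem.1
  have hSdisj : S.Pairwise (fun A B => Disjoint A B) := hSmem.2
  -- S is finite
  have hfin : S.Finite := by
    by_contra hinf
    have hinf' : S.Infinite := hinf
    apply H
    refine ⟨fun n => (hinf'.natEmbedding S n : Set I), ?_, ?_⟩
    · intro m n hmn
      refine hSdisj (hinf'.natEmbedding S m).2 (hinf'.natEmbedding S n).2 ?_
      intro hEq
      exact hmn ((hinf'.natEmbedding S).injective (Subtype.ext hEq))
    · intro n
      exact (hSatom _ (hinf'.natEmbedding S n).2).1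
  -- The union of S is in F
  have hT : ⋃₀ S ∈ F := by
    by_contra hTc
    have hpos : Pos F (⋃₀ S)ᶜ := by rwa [Pos, compl_compl]
    obtain ⟨B, hBsub, hBatom⟩ := exists_atomic_subset H hpos
    have hBS : B ∉ S := by
      intro hBS
      obtain ⟨i, hi⟩ := hBatom.1.nonempty
      exact (hBsub hi) ⟨B, hBS, hi⟩
    have hmem : insert B S ∈ 𝒜 := by
      constructor
      · rintro A (rfl | hA)
        · exact hBatom
        · exact hSatom A hA
      · refine Set.Pairwise.insert hSdisj ?_
        intro A hA _
        have hd : Disjoint B A := by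
          rw [Set.disjoint_left]
          intro i hiB hiA
          exact hBsub hiB ⟨A, hA, hiA⟩
        exact ⟨hd, hd.symm⟩
    exact hBS (hS.2 hmem (Set.subset_insert _ _) (Set.mem_insert _ _))
  -- enumerate S
  haveI := hfin.to_subtype
  obtain ⟨n, ⟨e⟩⟩ := Finite.exists_equiv_fin ↥S
  refine ⟨n, fun m => atomUltrafilter (hSatom _ (e.symm m).2), ?_⟩
  apply Filter.ext
  intro s
  rw [Filter.mem_iSup]
  have hall : (∀ m, s ∈ (atomUltrafilter (hSatom _ (e.symm m).2) : Filter I)) ↔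
      ∀ A ∈ S, Pos F (A ∩ s) := by
    constructor
    · intro h A hA
      have := h (e ⟨A, hA⟩)
      rw [Ultrafilter.mem_coe, mem_atomUltrafilter] at this
      simpa [e.symm_apply_apply] using this
    · intro h m
      rw [Ultrafilter.mem_coe, mem_atomUltrafilter]
      exact h _ (e.symm m).2
  rw [hall]
  constructor
  · intro hs A hA hcon
    refine (hSatom A hA).1 (Filter.mem_of_superset (Filter.inter_mem hs hcon) ?_)
    rintro i ⟨his, hic⟩ hiA
    exact hic ⟨hiA, his⟩
  · intro h
    have hmem : ∀ A ∈ S, Aᶜ ∪ s ∈ F := by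
      intro A hA
      have h1 : ¬ Pos F (A \ s) := fun hx => (hSatom A hA).2 s ⟨h A hA, hx⟩
      rw [Pos, not_not] at h1
      convert h1 using 1
      rw [Set.compl_eq_univ_diff]
      ext i; simp [Set.mem_diff]; tauto
    have hbi : ⋂ A ∈ S, (Aᶜ ∪ s) ∈ F := (Filter.biInter_mem hfin).2 hmem
    refine Filter.mem_of_superset (Filter.inter_mem hT hbi) ?_
    rintro i ⟨⟨A, hA, hiA⟩, hibi⟩
    have h2 : i ∈ Aᶜ ∪ s := by
      have := Set.mem_iInter₂.mp hibi A hA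
      exact this
    rcases h2 with h' | h'
    · exact absurd hiA h'
    · exact h'


/-- Ultrafilter limit of a function into a finite type. -/
lemma exists_lim (U : Ultrafilter I) {X : Type u} [Finite X] (f : I → X) :
    ∃ x, {i | f i = x} ∈ U := by
  obtain ⟨x, hx⟩ := (U.map f).eq_pure_of_finite
  refine ⟨x, ?_⟩
  have : {x} ∈ U.map f := by rw [hx]; exact Ultrafilter.mem_pure.2 rfl
  rw [Ultrafilter.mem_map] at this
  simpa [Set.preimage] using this

lemma lim_unique (U : Ultrafilter I) {X : Type u} {f : I → X} {x y : X}
    (hx : {i | f i = x} ∈ U) (hy : {i | f i = y} ∈ U) : x = y := by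
  by_contra hxy
  have h1 : {i | f i = x} ∩ {i | f i = y} ∈ U := Filter.inter_mem hx hy
  have h2 : {i | f i = x} ∩ {i | f i = y} = ∅ := by
    ext i; simp only [Set.mem_inter_iff, Set.mem_setOf_eq, Set.mem_empty_iff_false, iff_false]
    rintro ⟨rfl, h⟩; exact hxy h
  rw [h2] at h1
  exact (Filter.empty_notMem _) h1

noncomputable def ulim (U : Ultrafilter I) {X : Type u} [Finite X] (f : I → X) : X :=
  Classical.choose (exists_lim U f)

lemma ulim_spec (U : Ultrafilter I) {X : Type u} [Finite X] (f : I → X) :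
    {i | f i = ulim U f} ∈ U := Classical.choose_spec (exists_lim U f)

theorem finite_of_sup {X : Type u} [Finite X] {n : ℕ} {U : Fin n → Ultrafilter I}
    (h : F = ⨆ m, (U m : Filter I)) :
    Finite (ReducedProduct F (fun _ : I => X)) := by
  have hwd : ∀ a b : I → X, (redSetoid F (fun _ => X)).r a b →
      (fun m => ulim (U m) a) = (fun m => ulim (U m) b) := by
    intro a b hab
    funext m
    have hab' : {i | a i = b i} ∈ U m := by
      have : {i | a i = b i} ∈ F := hab
      rw [h, Filter.mem_iSup] at this
      exact this m
    have h1 : {i | a i = ulim (U m) a} ∩ {i | a i = b i} ⊆ {i | b i = ulim (U m) a} := by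
      rintro i ⟨h1, h2⟩
      simp only [Set.mem_setOf_eq] at *
      rw [← h2]; exact h1
    have h2 : {i | b i = ulim (U m) a} ∈ U m :=
      Filter.mem_of_superset (Filter.inter_mem (ulim_spec (U m) a) hab') h1
    exact lim_unique (U m) h2 (ulim_spec (U m) b)
  let c : ReducedProduct F (fun _ : I => X) → (Fin n → X) :=
    Quotient.lift (fun a (m : Fin n) => ulim (U m) a) hwd
  have hinj : Function.Injective c := by
    rintro ⟨a⟩ ⟨b⟩ hab
    apply Quotient.sound
    show {i | a i = b i} ∈ F
    rw [h, Filter.mem_iSup]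
    intro m
    have hm : ulim (U m) a = ulim (U m) b := congrFun hab m
    refine Filter.mem_of_superset
      (Filter.inter_mem (ulim_spec (U m) a) (ulim_spec (U m) b)) ?_
    rintro i ⟨h1, h2⟩
    simp only [Set.mem_setOf_eq] at *
    rw [h1, h2, hm]
  exact Finite.of_injective c hinj

theorem continuum_le_of_family {X : Type u} [Nontrivial X]
    (f : ℕ → Set I) (hdisj : Pairwise (Function.onFun Disjoint f))
    (hpos : ∀ n, Pos F (f n)) :
    2 ^ Cardinal.aleph0 ≤ Cardinal.mk (ReducedProduct F (fun _ : I => X)) := by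
  classical
  obtain ⟨x₀, x₁, hx⟩ := exists_pair_ne X
  let g : Set (ULift.{u} ℕ) → (I → X) := fun S i =>
    if ∃ n : ℕ, (⟨n⟩ : ULift ℕ) ∈ S ∧ i ∈ f n then x₀ else x₁
  have hkey : ∀ (S T : Set (ULift.{u} ℕ)) (n : ℕ), (⟨n⟩ : ULift ℕ) ∈ S →
      (⟨n⟩ : ULift ℕ) ∉ T → {i | g S i = g T i} ∉ F := by
    intro S T n hnS hnT hmem
    apply hpos n
    refine Filter.mem_of_superset hmem ?_
    intro i hi hifn
    simp only [Set.mem_setOf_eq] at hi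
    have h1 : g S i = x₀ := if_pos ⟨n, hnS, hifn⟩
    have h2 : g T i = x₁ := by
      apply if_neg
      rintro ⟨m, hmT, hifm⟩
      rcases eq_or_ne m n with rfl | hmn
      · exact hnT hmT
      · exact (Set.disjoint_left.1 (hdisj hmn)) hifm hifn
    rw [h1, h2] at hi
    exact hx hi
  have hinj : Function.Injective
      (fun S : Set (ULift.{u} ℕ) => reducedMk F (fun _ : I => X) (g S)) := by
    intro S T hST
    have hrel : {i | g S i = g T i} ∈ F := Quotient.exact hST
    by_contra hne
    have : ∃ a : ULift.{u} ℕ, ¬ (a ∈ S ↔ a ∈ T) := by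
      by_contra hall
      push_neg at hall
      exact hne (Set.ext fun a => hall a)
    obtain ⟨⟨n⟩, hn⟩ := this
    by_cases hnS : (⟨n⟩ : ULift.{u} ℕ) ∈ S <;> by_cases hnT : (⟨n⟩ : ULift.{u} ℕ) ∈ T
    · exact hn ⟨fun _ => hnT, fun _ => hnS⟩
    · exact hkey S T n hnS hnT hrel
    pick_goal 2
    · exact hn ⟨fun h => absurd h hnS, fun h => absurd h hnT⟩
    · refine hkey T S n hnT hnS ?_
      have : {i | g T i = g S i} = {i | g S i = g T i} := by
        ext i; simp [eq_comm]
      rw [this]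
      exact hrel
  calc 2 ^ Cardinal.aleph0 = Cardinal.mk (Set (ULift.{u} ℕ)) := by
        rw [Cardinal.mk_set, Cardinal.mk_uLift, Cardinal.mk_nat, Cardinal.lift_aleph0]
    _ ≤ _ := Cardinal.mk_le_of_injective hinj


end RedPow17

/-- Let `F` be a filter on `I` and `X` a finite set with more
than one element.  Then the following are equivalent: (1) `F` is the
intersection of finitely many ultrafilters on `I`; (2) the reduced power
`X^I/F` is finite; (3) the reduced power `X^I/F` has cardinality `< 2 ^ ℵ₀`. -/
theorem reduced_power_finite_iff {I : Type u} (F : Filter I)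
    (X : Type u) [Finite X] [Nontrivial X] :
    ((∃ (n : ℕ) (U : Fin n → Ultrafilter I), F = ⨆ m, (U m : Filter I))
      ↔ Finite (ReducedProduct F (fun _ : I => X)))
  ∧ ((∃ (n : ℕ) (U : Fin n → Ultrafilter I), F = ⨆ m, (U m : Filter I))
      ↔ Cardinal.mk (ReducedProduct F (fun _ : I => X)) < 2 ^ Cardinal.aleph0) := by
  classical
  have dir1 : (∃ (n : ℕ) (U : Fin n → Ultrafilter I), F = ⨆ m, (U m : Filter I)) →
      Finite (ReducedProduct F (fun _ : I => X)) := by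
    rintro ⟨n, U, h⟩
    exact RedPow17.finite_of_sup h
  have dir2 : Finite (ReducedProduct F (fun _ : I => X)) →
      Cardinal.mk (ReducedProduct F (fun _ : I => X)) < 2 ^ Cardinal.aleph0 := by
    intro h
    calc Cardinal.mk (ReducedProduct F (fun _ : I => X)) < Cardinal.aleph0 :=
          Cardinal.lt_aleph0_of_finite _
      _ ≤ 2 ^ Cardinal.aleph0 := by
          rw [Cardinal.two_power_aleph0]
          exact Cardinal.aleph0_lt_continuum.le
  have dir3 : Cardinal.mk (ReducedProduct F (fun _ : I => X)) < 2 ^ Cardinal.aleph0 →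
      (∃ (n : ℕ) (U : Fin n → Ultrafilter I), F = ⨆ m, (U m : Filter I)) := by
    intro h
    apply RedPow17.isSup_of_noInfFam
    rintro ⟨f, hd, hp⟩
    exact absurd (RedPow17.continuum_le_of_family (X := X) f hd hp) (not_le.2 h)
  exact ⟨⟨dir1, fun h => dir3 (dir2 h)⟩, ⟨fun h => dir2 (dir1 h), dir3⟩⟩
end

section
/- Let X be a countably infinite set, I a set, and F a filter on I which is not the intersection of finitely many countably complete ultrafilters on I. Then the reduced power X^I/F has cardinality at least 2^{ℵ0}. -/
universe u

/-!
If some `p : I → ℕ` is unbounded along `F`, sending a bit sequence `x` to the class of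
`i ↦ (x 0, …, x (p i - 1))`, coded in `X`, is injective. Otherwise every ultrafilter extending `F`
is countably complete, since a failure of countable completeness produces an unbounded `p`, and
there are only finitely many of them: countably many distinct countably complete ultrafilters can
be separated by pairwise disjoint sets, and these again produce an unbounded `p`. As `F` is the
intersection of the ultrafilters extending it, `F` is then a finite intersection of countably
complete ultrafilters.
-/
open Filter Set Cardinal Function

section

variable {I : Type u} {F : Filter I}

lemma CountablyComplete.countableInterFilter (hF : CountablyComplete F) :
    CountableInterFilter F where
  countable_sInter_mem S hS hmem := by
    rcases S.eq_empty_or_nonempty with rfl | hne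
    · simp
    obtain ⟨s, rfl⟩ := hS.exists_eq_range hne
    rw [sInter_range]
    exact hF s fun n => hmem _ (mem_range_self n)

lemma exists_not_isBoundedUnder_of_not_countablyComplete (hF : ¬ CountablyComplete F) :
    ∃ p : I → ℕ, ¬ IsBoundedUnder (· ≤ ·) F p := by
  classical
  obtain ⟨s, hs, hnot⟩ : ∃ s : ℕ → Set I, (∀ n, s n ∈ F) ∧ (⋂ n, s n) ∉ F := by
    simpa [CountablyComplete] using hF
  -- `p i` is the first stage at which `i` leaves the sequence `s`.
  refine ⟨fun i => if h : ∃ n, i ∉ s n then Nat.find h else 0, ?_⟩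
  rintro ⟨k, hk⟩
  have hfin : ∀ᶠ i in F, ∀ n ∈ Iic k, i ∈ s n :=
    (eventually_all_finite (finite_Iic k)).2 fun n _ => hs n
  refine hnot (mem_of_superset ((eventually_map.1 hk).and hfin) ?_)
  rintro i ⟨hik, hi⟩
  refine mem_iInter.2 fun n => ?_
  by_contra hn
  have h : ∃ n, i ∉ s n := ⟨n, hn⟩
  simp only [dif_pos h] at hik
  exact Nat.find_spec h (hi _ hik)

lemma exists_not_isBoundedUnder_of_pairwise_disjoint {A : ℕ → Set I}
    (hA : Pairwise (Disjoint on A)) (hF : ∀ n, ∃ᶠ i in F, i ∈ A n) :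
    ∃ p : I → ℕ, ¬ IsBoundedUnder (· ≤ ·) F p := by
  classical
  refine ⟨fun i => if h : ∃ n, i ∈ A n then h.choose else 0, ?_⟩
  rintro ⟨k, hk⟩
  obtain ⟨i, hi, hik⟩ := ((hF (k + 1)).and_eventually (eventually_map.1 hk)).exists
  have h : ∃ n, i ∈ A n := ⟨k + 1, hi⟩
  have hchoose : h.choose = k + 1 :=
    hA.eq (Set.not_disjoint_iff.2 ⟨i, h.choose_spec, hi⟩)
  simp only [dif_pos h, hchoose] at hik
  omega

lemma Ultrafilter.exists_pairwise_disjoint_mem {U : ℕ → Ultrafilter I}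
    (hU : Injective U) (hcc : ∀ n, CountablyComplete (U n : Filter I)) :
    ∃ A : ℕ → Set I, Pairwise (Disjoint on A) ∧ ∀ n, A n ∈ U n := by
  have hsep : ∀ n m, ∃ s ∈ U n, n ≠ m → s ∉ U m := by
    intro n m
    by_cases h : n = m
    · exact ⟨univ, univ_mem, fun h' => (h' h).elim⟩
    · obtain ⟨s, hs, hsm⟩ :=
        Filter.not_le.1 fun hle => h (hU (Ultrafilter.coe_le_coe.1 hle)).symm
      exact ⟨s, hs, fun _ => hsm⟩
  choose sep hsep_mem hsep_not_mem using hsep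
  refine ⟨fun n => ⋂ m ∈ {m | m ≠ n}, sep n m \ sep m n, ?_, fun n => ?_⟩
  · intro n m hnm
    refine Set.disjoint_left.2 fun i hin him => ?_
    exact (mem_iInter₂.1 him n hnm).2 (mem_iInter₂.1 hin m hnm.symm).1
  · have := (hcc n).countableInterFilter
    refine (countable_bInter_mem (to_countable _)).2 fun m hm => inter_mem (hsep_mem n m) ?_
    exact Ultrafilter.compl_mem_iff_notMem.2 (hsep_not_mem m n hm)

lemma countablyComplete_of_le_of_forall_isBoundedUnder
    (hF : ∀ p : I → ℕ, IsBoundedUnder (· ≤ ·) F p) {U : Ultrafilter I} (hU : ↑U ≤ F) :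
    CountablyComplete (U : Filter I) := by
  by_contra hcc
  obtain ⟨p, hp⟩ := exists_not_isBoundedUnder_of_not_countablyComplete hcc
  exact hp ((hF p).mono hU)

lemma finite_setOf_ultrafilter_le_of_forall_isBoundedUnder
    (hF : ∀ p : I → ℕ, IsBoundedUnder (· ≤ ·) F p) :
    {U : Ultrafilter I | ↑U ≤ F}.Finite := by
  by_contra hinf
  set V := Set.Infinite.natEmbedding _ hinf
  obtain ⟨A, hA, hAU⟩ := Ultrafilter.exists_pairwise_disjoint_mem (U := fun n => (V n).1)
    (Subtype.val_injective.comp V.injective)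
    fun n => countablyComplete_of_le_of_forall_isBoundedUnder hF (V n).2
  obtain ⟨p, hp⟩ := exists_not_isBoundedUnder_of_pairwise_disjoint hA
    fun n => (Eventually.frequently (hAU n)).filter_mono (V n).2
  exact hp (hF p)

lemma exists_countablyComplete_ultrafilters_eq_iSup_of_forall_isBoundedUnder
    (hF : ∀ p : I → ℕ, IsBoundedUnder (· ≤ ·) F p) :
    ∃ (n : ℕ) (U : Fin n → Ultrafilter I),
      (∀ m, CountablyComplete (U m : Filter I)) ∧ F = ⨆ m, (U m : Filter I) := by
  set S := {U : Ultrafilter I | ↑U ≤ F}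
  have := (finite_setOf_ultrafilter_le_of_forall_isBoundedUnder hF).to_subtype
  set e := (Finite.equivFin S).symm
  refine ⟨_, fun m => (e m).1,
    fun m => countablyComplete_of_le_of_forall_isBoundedUnder hF (e m).2, ?_⟩
  rw [e.iSup_comp (g := fun U : S => (U.1 : Filter I))]
  exact (iSup_ultrafilter_le_eq F).symm.trans iSup_subtype'

lemma two_power_aleph0_le_mk_reducedProduct_of_not_isBoundedUnder (X : Type u) [Infinite X]
    {p : I → ℕ} (hp : ¬ IsBoundedUnder (· ≤ ·) F p) :
    2 ^ ℵ₀ ≤ #(ReducedProduct F fun _ : I => X) := by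
  obtain ⟨e⟩ : Nonempty (List Bool ↪ X) :=
    ⟨(Encodable.encode' (List Bool)).trans (Infinite.natEmbedding X)⟩
  let f (x : ℕ → Bool) : ReducedProduct F fun _ : I => X :=
    reducedMk F _ fun i => e ((List.range (p i)).map x)
  have hf : Injective f := by
    intro x y hxy
    by_contra hne
    obtain ⟨k, hk⟩ := Function.ne_iff.1 hne
    refine hp ⟨k, eventually_map.2 (mem_of_superset (Quotient.exact hxy) fun i hi => ?_)⟩
    by_contra hki
    exact hk (List.map_inj_left.1 (e.injective hi) k (List.mem_range.2 (not_le.1 hki)))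
  calc 2 ^ ℵ₀ = lift.{u} #(ℕ → Bool) := by simp
    _ ≤ lift.{0} #(ReducedProduct F fun _ : I => X) := lift_mk_le'.2 ⟨⟨f, hf⟩⟩
    _ = _ := lift_uzero _

end

theorem continuum_le_mk_reduced_power_general {I : Type u} (X : Type u)
    [Infinite X] (F : Filter I)
    (hF : ¬ ∃ (n : ℕ) (U : Fin n → Ultrafilter I),
      (∀ m, CountablyComplete (U m : Filter I)) ∧ F = ⨆ m, (U m : Filter I)) :
    2 ^ Cardinal.aleph0 ≤ Cardinal.mk (ReducedProduct F (fun _ : I => X)) := by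
  obtain ⟨p, hp⟩ : ∃ p : I → ℕ, ¬ IsBoundedUnder (· ≤ ·) F p := by
    by_contra! hbdd
    exact hF (exists_countablyComplete_ultrafilters_eq_iSup_of_forall_isBoundedUnder hbdd)
  exact two_power_aleph0_le_mk_reducedProduct_of_not_isBoundedUnder X hp

/-- Let `X` be a countably infinite set, `I` a set, and `F` a
filter on `I` which is not the intersection of finitely many countably
complete ultrafilters on `I`.  Then the reduced power `X^I/F` has cardinality
at least `2 ^ ℵ₀`. -/
theorem continuum_le_mk_reduced_power {I : Type u} (X : Type u)
    [Countable X] [Infinite X] (F : Filter I)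
    (hF : ¬ ∃ (n : ℕ) (U : Fin n → Ultrafilter I),
      (∀ m, CountablyComplete (U m : Filter I)) ∧ F = ⨆ m, (U m : Filter I)) :
    2 ^ Cardinal.aleph0 ≤ Cardinal.mk (ReducedProduct F (fun _ : I => X)) :=
  continuum_le_mk_reduced_power_general X F hF
end
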